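/- arXiv:1108.0521 — 4 statements merged into one kernel-verified Lean document; each statement's English description precedes it below -/
import Mathlib

section
/- Let G be a powerful finite p-group of exponent p^e. Then for every 0 ≤ i ≤ e−1 and every x ∈ G and y ∈ G^{p^{e-i-1}}, one has (xy)^{p^i} = x^{p^i} y^{p^i}. -/
/-- The subgroup of `G` generated by all `n`-th powers. -/
def subgroupPow (G : Type*) [Group G] (n : ℕ) : Subgroup G :=
  Subgroup.closure {x : G | ∃ g : G, g ^ n = x}

/-- A finite `p`-group is powerful if `[G,G] ≤ Gᵖ` for odd `p`, or `[G,G] ≤ G⁴` for `p = 2`. -/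
def IsPowerful (p : ℕ) (G : Type*) [Group G] : Prop :=
  if p = 2 then commutator G ≤ subgroupPow G 4 else commutator G ≤ subgroupPow G p

universe u
variable {G : Type u} [Group G]
open scoped commutatorElement

lemma pow_mem_subgroupPow (g : G) (n : ℕ) : g ^ n ∈ subgroupPow G n :=
  Subgroup.subset_closure ⟨g, rfl⟩

instance subgroupPow_normal (n : ℕ) : (subgroupPow G n).Normal := by
  constructor
  intro w hw g
  induction hw using Subgroup.closure_induction with
  | mem x hx => obtain ⟨a, rfl⟩ := hx
                exact Subgroup.subset_closure ⟨g * a * g⁻¹, by rw [← conj_pow]⟩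
  | one => simpa using (subgroupPow G n).one_mem
  | mul x y hx hy ihx ihy =>
      have : g * (x * y) * g⁻¹ = (g * x * g⁻¹) * (g * y * g⁻¹) := by group
      rw [this]; exact (subgroupPow G n).mul_mem ihx ihy
  | inv x hx ihx =>
      have : g * x⁻¹ * g⁻¹ = (g * x * g⁻¹)⁻¹ := by group
      rw [this]; exact (subgroupPow G n).inv_mem ihx

lemma subgroupPow_le (a b : ℕ) (h : a ∣ b) : subgroupPow G b ≤ subgroupPow G a := by
  rw [subgroupPow, Subgroup.closure_le]
  rintro x ⟨g, rfl⟩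
  obtain ⟨c, rfl⟩ := h
  rw [mul_comm, pow_mul]
  exact pow_mem_subgroupPow _ _

lemma subgroupPow_eq_bot {n : ℕ} (h : ∀ g : G, g ^ n = 1) : subgroupPow G n = ⊥ := by
  rw [subgroupPow, ← Subgroup.closure_singleton_one]
  congr 1
  ext x
  constructor
  · rintro ⟨g, rfl⟩; simp [h g]
  · rintro rfl; exact ⟨1, one_pow n⟩

lemma mk_mem_subgroupPow {N : Subgroup G} [N.Normal] {n : ℕ} {y : G}
    (hy : y ∈ subgroupPow G n) : (y : G ⧸ N) ∈ subgroupPow (G ⧸ N) n := by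
  induction hy using Subgroup.closure_induction with
  | mem x hx => obtain ⟨a, rfl⟩ := hx
                exact Subgroup.subset_closure ⟨(a : G ⧸ N), rfl⟩
  | one => simpa using (subgroupPow (G ⧸ N) n).one_mem
  | mul x y hx hy ihx ihy => simpa using (subgroupPow (G ⧸ N) n).mul_mem ihx ihy
  | inv x hx ihx => simpa using (subgroupPow (G ⧸ N) n).inv_mem ihx

lemma commutator_le_quotient {c : ℕ} (hc : commutator G ≤ subgroupPow G c)
    (N : Subgroup G) [N.Normal] : commutator (G ⧸ N) ≤ subgroupPow (G ⧸ N) c := by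
  rw [commutator_def, Subgroup.commutator_le]
  intro g1 _ g2 _
  obtain ⟨a, rfl⟩ := QuotientGroup.mk_surjective g1
  obtain ⟨b, rfl⟩ := QuotientGroup.mk_surjective g2
  have h1 : (⁅a, b⁆ : G) ∈ commutator G := Subgroup.commutator_mem_commutator trivial trivial
  have h2 : ((⁅a, b⁆ : G) : G ⧸ N) ∈ subgroupPow (G ⧸ N) c := mk_mem_subgroupPow (hc h1)
  simpa [commutatorElement_def] using h2

lemma isPowerful_quotient {p : ℕ} (hpow : IsPowerful p G) (N : Subgroup G) [N.Normal] :
    IsPowerful p (G ⧸ N) := by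
  unfold IsPowerful at hpow ⊢
  split_ifs at hpow ⊢ <;> exact commutator_le_quotient hpow N

section hall
variable {X Y c : G} (hcent : ∀ z : G, c * z = z * c)

include hcent in
lemma centpow (k : ℕ) (z : G) : c ^ k * z = z * c ^ k := by
  induction k with
  | zero => simp
  | succ k ih => rw [pow_succ, mul_assoc, hcent, ← mul_assoc, ih, mul_assoc]

include hcent in
lemma hall_key (hc : Y * X = c * (X * Y)) (n : ℕ) : Y ^ n * X = c ^ n * (X * Y ^ n) := by
  induction n with
  | zero => simp
  | succ n ih =>
      rw [pow_succ', mul_assoc, ih, ← mul_assoc, ← centpow hcent n Y, mul_assoc,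
        ← mul_assoc Y X, hc]
      group

include hcent in
/-- Hall's collection identity in class ≤ 2 situations. -/
lemma hall2 (hc : Y * X = c * (X * Y)) (n : ℕ) :
    (X * Y) ^ n = X ^ n * Y ^ n * c ^ n.choose 2 := by
  induction n with
  | zero => simp
  | succ n ih =>
      have hC : (n + 1).choose 2 = n.choose 2 + n := by
        rw [Nat.choose_succ_succ]; simp [Nat.choose_one_right, Nat.add_comm]
      calc (X * Y) ^ (n + 1) = X ^ n * Y ^ n * c ^ n.choose 2 * (X * Y) := by
            rw [pow_succ, ih]
      _ = X ^ n * (Y ^ n * X) * (c ^ n.choose 2 * Y) := by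
            rw [mul_assoc (X ^ n * Y ^ n) (c ^ n.choose 2) (X * Y),
              ← mul_assoc (c ^ n.choose 2) X Y, centpow hcent _ X]
            group
      _ = X ^ n * (c ^ n * (X * Y ^ n)) * (Y * c ^ n.choose 2) := by
            rw [hall_key hcent hc n, centpow hcent _ Y]
      _ = X ^ n * c ^ n * (X * Y ^ (n + 1)) * c ^ n.choose 2 := by
            rw [pow_succ']
            group
      _ = X ^ (n + 1) * Y ^ (n + 1) * c ^ ((n + 1).choose 2) := by
            rw [mul_assoc (X ^ n) (c ^ n) (X * Y ^ (n + 1)), ← mul_assoc (c ^ n) X,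
              centpow hcent n X, mul_assoc X (c ^ n) (Y ^ (n + 1)),
              centpow hcent n (Y ^ (n + 1)), hC, pow_add]
            group
end hall

section comm
variable {a x : G}

lemma comm_pow_succ (a x : G) (n : ℕ) :
    ⁅a ^ (n + 1), x⁆ = a ^ n * ⁅a, x⁆ * (a ^ n)⁻¹ * ⁅a ^ n, x⁆ := by
  simp only [commutatorElement_def]
  rw [pow_succ']
  group

variable {d : G} (hcent : ∀ z : G, d * z = z * d) (hd : d = ⁅⁅a, x⁆, a⁆)

include hcent hd in
lemma conj_comm_pow (k : ℕ) : a ^ k * ⁅a, x⁆ * (a ^ k)⁻¹ = ⁅a, x⁆ * (d ^ k)⁻¹ := by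
  set c := ⁅a, x⁆ with hc
  have base : a * c * a⁻¹ = c * d⁻¹ := by
    have h1 : d = c * a * c⁻¹ * a⁻¹ := by rw [hd, commutatorElement_def]
    have h2 : a * c * a⁻¹ = d⁻¹ * c := by rw [h1]; group
    have hco : Commute d c := hcent c
    rw [h2, hco.inv_left.eq]
  induction k with
  | zero => simp
  | succ k ih =>
      have h2 : a ^ (k + 1) * c * (a ^ (k + 1))⁻¹ = a * (a ^ k * c * (a ^ k)⁻¹) * a⁻¹ := by
        rw [pow_succ']; group
      have centinv : ∀ (k : ℕ) (z : G), (d ^ k)⁻¹ * z = z * (d ^ k)⁻¹ :=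
        fun k z => (((show Commute d z from hcent z).pow_left k).inv_left).eq
      rw [h2, ih, ← mul_assoc a c, mul_assoc (a * c), centinv k a⁻¹, ← mul_assoc (a * c), base]
      group

include hcent hd in
lemma comm_pow_eq (n : ℕ) : ⁅a ^ n, x⁆ = ⁅a, x⁆ ^ n * (d ^ n.choose 2)⁻¹ := by
  set c := ⁅a, x⁆ with hc
  have centinv : ∀ (k : ℕ) (z : G), (d ^ k)⁻¹ * z = z * (d ^ k)⁻¹ :=
    fun k z => (((show Commute d z from hcent z).pow_left k).inv_left).eq
  induction n with
  | zero => simp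
  | succ n ih =>
      have hC : (n + 1).choose 2 = n.choose 2 + n := by
        rw [Nat.choose_succ_succ]; simp [Nat.choose_one_right, Nat.add_comm]
      rw [comm_pow_succ, conj_comm_pow hcent hd, ih, hC, ← hc, mul_assoc c (d ^ n)⁻¹,
        ← mul_assoc (d ^ n)⁻¹ (c ^ n), centinv n (c ^ n)]
      group

end comm

lemma comm_mem_of_center_quotient {N : Subgroup G} [N.Normal] {w : G}
    (h : (w : G ⧸ N) ∈ Subgroup.center (G ⧸ N)) (x : G) : ⁅w, x⁆ ∈ N := by
  rw [← QuotientGroup.eq_one_iff]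
  have hc : Commute ((w : G ⧸ N)) ((x : G ⧸ N)) := (Subgroup.mem_center_iff.1 h _).symm
  have h2 := commutatorElement_eq_one_iff_commute.2 hc
  exact h2

lemma quotient_card_lt [Finite G] {N : Subgroup G} (h : N ≠ ⊥) :
    Nat.card (G ⧸ N) < Nat.card G := by
  have h1 : Nat.card G = Nat.card (G ⧸ N) * Nat.card N :=
    Subgroup.card_eq_card_quotient_mul_card_subgroup N
  have h2 : 1 < Nat.card N := by
    rw [Finite.one_lt_card_iff_nontrivial]
    exact (Subgroup.nontrivial_iff_ne_bot N).2 h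
  have h3 : 0 < Nat.card (G ⧸ N) := Nat.card_pos
  nlinarith

lemma exists_central_of_prime (p : ℕ) (hp : p.Prime) [Finite G] [Nontrivial G]
    (hpG : IsPGroup p G) : ∃ z : G, z ≠ 1 ∧ z ∈ Subgroup.center G ∧ z ^ p = 1 := by
  classical
  haveI : Fact p.Prime := ⟨hp⟩
  have hcent : Nontrivial (Subgroup.center G) := hpG.center_nontrivial
  obtain ⟨z, hz⟩ := exists_ne (1 : Subgroup.center G)
  have hz0 : (z : G) ≠ 1 := by
    intro h; apply hz; ext; simpa using h
  have hex : ∃ k, (z : G) ^ p ^ k = 1 := hpG z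
  set k := Nat.find hex with hk
  have hk1 : (z : G) ^ p ^ k = 1 := Nat.find_spec hex
  have hkne : k ≠ 0 := by
    intro h0
    rw [h0, pow_zero, pow_one] at hk1
    exact hz0 hk1
  refine ⟨(z : G) ^ p ^ (k - 1), ?_, ?_, ?_⟩
  · exact Nat.find_min hex (by omega)
  · exact Subgroup.pow_mem _ z.2 _
  · rw [← pow_mul, ← pow_succ]
    have : k - 1 + 1 = k := by omega
    rw [this]; exact hk1

/-- Key lemma: in a powerful p-group of exponent dividing `p^(m+1)` (odd p) or
`2^(m+2)` (p=2), the subgroup generated by `p^m`-th powers is central. -/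
lemma key_central (p : ℕ) (hp : p.Prime) (m : ℕ) :
    ∀ (n : ℕ) (G : Type u) [Group G] [Finite G], Nat.card G ≤ n →
      IsPowerful p G → (∀ g : G, g ^ p ^ (m + if p = 2 then 2 else 1) = 1) →
      ∀ w ∈ subgroupPow G (p ^ m), w ∈ Subgroup.center G := by
  induction m with
  | zero =>
      intro n G _ _ _ hpow hexp w _
      have hbot : commutator G = ⊥ := by
        rw [IsPowerful] at hpow
        by_cases hp2 : p = 2
        · rw [if_pos hp2] at hpow
          rw [eq_bot_iff]
          refine le_trans hpow (le_of_eq (subgroupPow_eq_bot fun g => ?_))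
          have := hexp g
          rw [hp2] at this
          norm_num at this
          convert this using 2
        · rw [if_neg hp2] at hpow
          rw [eq_bot_iff]
          refine le_trans hpow (le_of_eq (subgroupPow_eq_bot fun g => ?_))
          have := hexp g
          rw [if_neg hp2, zero_add, pow_one] at this
          exact this
      rw [Subgroup.mem_center_iff]
      intro g
      have : ⁅w, g⁆ ∈ commutator G := Subgroup.commutator_mem_commutator trivial trivial
      rw [hbot, Subgroup.mem_bot] at this
      have := commutatorElement_eq_one_iff_commute.1 this
      exact this.symm
  | succ m ihm =>
      intro n
      induction n with
      | zero =>
          intro G _ _ hcard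
          have : 0 < Nat.card G := Nat.card_pos
          omega
      | succ n ihn =>
          intro G _ _ hcard hpow hexp w hw
          -- it suffices to prove generators are central
          suffices hgen : ∀ g : G, g ^ p ^ (m + 1) ∈ Subgroup.center G by
            have hle : subgroupPow G (p ^ (m + 1)) ≤ Subgroup.center G := by
              rw [subgroupPow, Subgroup.closure_le]
              rintro _ ⟨g, rfl⟩
              exact hgen g
            exact hle hw
          set kp := (if p = 2 then 2 else 1) with hkp
          rcases subsingleton_or_nontrivial G with hss | hnt
          · intro g
            rw [Subgroup.mem_center_iff]
            intro h
            exact Subsingleton.elim _ _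
          · have hpG : IsPGroup p G := fun g => ⟨m + 1 + kp, hexp g⟩
            -- ★ : commutators of G_{p^m} land in G_{p^(m+kp)}
            have hstar : ∀ a ∈ subgroupPow G (p ^ m), ∀ x : G,
                ⁅a, x⁆ ∈ subgroupPow G (p ^ (m + kp)) := by
              intro a ha x
              set N := subgroupPow G (p ^ (m + kp))
              have hexpQ : ∀ q : G ⧸ N, q ^ p ^ (m + kp) = 1 := by
                intro q
                obtain ⟨b, rfl⟩ := QuotientGroup.mk_surjective q
                have : ((b ^ p ^ (m + kp) : G) : G ⧸ N) = 1 :=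
                  (QuotientGroup.eq_one_iff _).2 (pow_mem_subgroupPow b _)
                simpa using this
              have hQ := ihm (Nat.card (G ⧸ N)) (G ⧸ N) le_rfl
                (isPowerful_quotient hpow N) hexpQ (↑a) (mk_mem_subgroupPow ha)
              exact comm_mem_of_center_quotient hQ x
            -- † : commutators of G_{p^(m+1)} land in a small central subgroup N
            obtain ⟨z1, hz1ne, hz1c, hz1p⟩ := exists_central_of_prime p hp hpG
            set N := Subgroup.zpowers z1 with hN
            have hNle : N ≤ Subgroup.center G := Subgroup.zpowers_le.2 hz1c
            haveI hNnormal : N.Normal := by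
              constructor
              intro n₁ hn₁ g
              have : g * n₁ * g⁻¹ = n₁ := by
                have := (Subgroup.mem_center_iff.1 (hNle hn₁)) g⁻¹
                rw [mul_assoc, ← this]
                group
              rwa [this]
            have hNexp : ∀ u ∈ N, u ^ p = 1 := by
              intro u hu
              obtain ⟨k, rfl⟩ := Subgroup.mem_zpowers_iff.1 hu
              rw [← zpow_natCast (z1 ^ k) p, ← zpow_mul, mul_comm, zpow_mul,
                zpow_natCast z1 p, hz1p, one_zpow]
            have hNcent : ∀ u ∈ N, ∀ z : G, u * z = z * u := by
              intro u hu z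
              exact ((Subgroup.mem_center_iff.1 (hNle hu)) z).symm
            have hNbot : N ≠ ⊥ := by
              intro h
              have : z1 ∈ (⊥ : Subgroup G) := h ▸ Subgroup.mem_zpowers z1
              exact hz1ne (Subgroup.mem_bot.1 this)
            have hcardQ2 : Nat.card (G ⧸ N) ≤ n := by
              have := quotient_card_lt (N := N) hNbot
              omega
            have hexpQ2 : ∀ q : G ⧸ N, q ^ p ^ (m + 1 + kp) = 1 := by
              intro q
              obtain ⟨b, rfl⟩ := QuotientGroup.mk_surjective q
              have : ((b ^ p ^ (m + 1 + kp) : G) : G ⧸ N) = 1 := by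
                rw [hexp b]; simp
              simpa using this
            have hdag : ∀ a ∈ subgroupPow G (p ^ (m + 1)), ∀ x : G, ⁅a, x⁆ ∈ N := by
              intro a ha x
              have hQ := ihn (G ⧸ N) hcardQ2 (isPowerful_quotient hpow N) hexpQ2
                (↑a) (mk_mem_subgroupPow ha)
              exact comm_mem_of_center_quotient hQ x
            by_cases hp2 : p = 2
            · -- p = 2 : kp = 2
              subst hp2
              have hkp2 : kp = 2 := by rw [hkp, if_pos rfl]
              -- G_{p^(m+2)} is central
              have hGm2c : ∀ u ∈ subgroupPow G (2 ^ (m + 2)), u ∈ Subgroup.center G := by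
                have hle : subgroupPow G (2 ^ (m + 2)) ≤ Subgroup.center G := by
                  rw [subgroupPow, Subgroup.closure_le]
                  rintro _ ⟨g, rfl⟩
                  simp only [SetLike.mem_coe]
                  rw [Subgroup.mem_center_iff]
                  intro x
                  set b := g ^ 2 ^ (m + 1) with hb
                  have hbmem : b ∈ subgroupPow G (2 ^ (m + 1)) := pow_mem_subgroupPow g _
                  have hc' : ⁅b, x⁆ ∈ N := hdag b hbmem x
                  have hd1 : ⁅⁅b, x⁆, b⁆ = 1 := by
                    apply commutatorElement_eq_one_iff_commute.2
                    exact (hNcent _ hc' b)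
                  have h2 : ⁅b ^ 2, x⁆ = ⁅b, x⁆ ^ 2 * ((⁅⁅b, x⁆, b⁆ : G) ^ Nat.choose 2 2)⁻¹ := by
                    refine comm_pow_eq ?_ rfl 2
                    intro z
                    rw [hd1]; group
                  rw [hd1, one_pow, inv_one, mul_one] at h2
                  have hbx2 : ⁅b, x⁆ ^ 2 = 1 := hNexp _ hc'
                  have hcomm : ⁅g ^ 2 ^ (m + 2), x⁆ = 1 := by
                    have hgb : g ^ 2 ^ (m + 2) = b ^ 2 := by
                      rw [hb, ← pow_mul, ← pow_succ]
                    rw [hgb, h2, hbx2]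
                  exact (commutatorElement_eq_one_iff_commute.1 hcomm).symm
                exact fun u hu => hle hu
              -- exponent of G_{p^(m+2)} is 2
              have hGm2exp : ∀ u ∈ subgroupPow G (2 ^ (m + 2)), u ^ 2 = 1 := by
                intro u hu
                induction hu using Subgroup.closure_induction with
                | mem v hv =>
                    obtain ⟨g, rfl⟩ := hv
                    rw [← pow_mul, ← pow_succ]
                    have := hexp g
                    rw [hkp2, show m + 1 + 2 = m + 2 + 1 from by omega] at this
                    exact this
                | one => simp
                | mul v v' hv hv' ihv ihv' =>
                    have hcomm : Commute v v' := by
                      have := Subgroup.mem_center_iff.1 (hGm2c v hv) v'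
                      exact this.symm
                    rw [hcomm.mul_pow, ihv, ihv', one_mul]
                | inv v hv ihv => rw [inv_pow, ihv, inv_one]
              -- conclude : each generator of G_{p^(m+1)} is central
              intro g
              rw [Subgroup.mem_center_iff]
              intro x
              set a := g ^ 2 ^ m with ha
              have hamem : a ∈ subgroupPow G (2 ^ m) := pow_mem_subgroupPow g _
              have hc : ⁅a, x⁆ ∈ subgroupPow G (2 ^ (m + 2)) := by
                have := hstar a hamem x
                rwa [hkp2] at this
              have hccent := hGm2c _ hc
              have hd1 : ⁅⁅a, x⁆, a⁆ = 1 := by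
                apply commutatorElement_eq_one_iff_commute.2
                exact (Subgroup.mem_center_iff.1 hccent a).symm
              have h2 : ⁅a ^ 2, x⁆ = ⁅a, x⁆ ^ 2 * ((⁅⁅a, x⁆, a⁆ : G) ^ Nat.choose 2 2)⁻¹ := by
                refine comm_pow_eq ?_ rfl 2
                intro z
                rw [hd1]; group
              rw [hd1, one_pow, inv_one, mul_one, hGm2exp _ hc] at h2
              have hga : g ^ 2 ^ (m + 1) = a ^ 2 := by
                rw [ha, ← pow_mul, ← pow_succ]
              have : ⁅g ^ 2 ^ (m + 1), x⁆ = 1 := by rw [hga, h2]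
              exact (commutatorElement_eq_one_iff_commute.1 this).symm
            · -- p odd : kp = 1
              have hkp1 : kp = 1 := by rw [hkp, if_neg hp2]
              have hpodd : 2 < p := by
                rcases hp.two_le.lt_or_eq with h | h
                · exact h
                · exact absurd h.symm hp2
              have hdvd : p ∣ Nat.choose p 2 := hp.dvd_choose_self (by norm_num) hpodd
              -- exponent of G_{p^(m+1)} is p
              have hGm1exp : ∀ u ∈ subgroupPow G (p ^ (m + 1)), u ^ p = 1 := by
                intro u hu
                induction hu using Subgroup.closure_induction with
                | mem v hv =>
                    obtain ⟨g, rfl⟩ := hv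
                    rw [← pow_mul, ← pow_succ]
                    have := hexp g
                    rwa [hkp1] at this
                | one => simp
                | mul v v' hv hv' ihv ihv' =>
                    have hvmem : v' ∈ subgroupPow G (p ^ (m + 1)) := hv'
                    have hc0 : ⁅v', v⁆ ∈ N := hdag v' hv' v
                    have hcent0 : ∀ z : G, ⁅v', v⁆ * z = z * ⁅v', v⁆ := fun z => hNcent _ hc0 z
                    have h0 : v' * v = ⁅v', v⁆ * (v * v') := by
                      rw [commutatorElement_def]; group
                    have := hall2 hcent0 h0 p
                    rw [this, ihv, ihv', one_mul, one_mul]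
                    obtain ⟨t, ht⟩ := hdvd
                    rw [ht, pow_mul, hNexp _ hc0, one_pow]
                | inv v hv ihv => rw [inv_pow, ihv, inv_one]
              -- conclude
              intro g
              rw [Subgroup.mem_center_iff]
              intro x
              set a := g ^ p ^ m with ha
              have hamem : a ∈ subgroupPow G (p ^ m) := pow_mem_subgroupPow g _
              have hc : ⁅a, x⁆ ∈ subgroupPow G (p ^ (m + 1)) := by
                have := hstar a hamem x
                rwa [hkp1] at this
              have hd : ⁅⁅a, x⁆, a⁆ ∈ N := hdag _ hc a
              have hdcent : ∀ z : G, ⁅⁅a, x⁆, a⁆ * z = z * ⁅⁅a, x⁆, a⁆ :=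
                fun z => hNcent _ hd z
              have h2 : ⁅a ^ p, x⁆ = ⁅a, x⁆ ^ p * ((⁅⁅a, x⁆, a⁆ : G) ^ Nat.choose p 2)⁻¹ :=
                comm_pow_eq hdcent rfl p
              obtain ⟨t, ht⟩ := hdvd
              rw [hGm1exp _ hc, ht, pow_mul, hNexp _ hd, one_pow, inv_one, mul_one] at h2
              have hga : g ^ p ^ (m + 1) = a ^ p := by
                rw [ha, ← pow_mul, ← pow_succ]
              have : ⁅g ^ p ^ (m + 1), x⁆ = 1 := by rw [hga, h2]
              exact (commutatorElement_eq_one_iff_commute.1 this).symm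

lemma center_quotient_of_comm {N : Subgroup G} [N.Normal] {w : G}
    (h : ∀ x : G, ⁅w, x⁆ ∈ N) : (w : G ⧸ N) ∈ Subgroup.center (G ⧸ N) := by
  rw [Subgroup.mem_center_iff]
  intro q
  obtain ⟨x, rfl⟩ := QuotientGroup.mk_surjective q
  have h1 : ((⁅w, x⁆ : G) : G ⧸ N) = 1 := (QuotientGroup.eq_one_iff _).2 (h x)
  have h2 : (⁅(w : G ⧸ N), (x : G ⧸ N)⁆) = 1 := h1
  exact (commutatorElement_eq_one_iff_commute.1 h2).symm

/-- F4 : `[G^{p^j}, G] ≤ G^{p^(j+1)}` (odd p) resp. `G^{p^(j+2)}` (p = 2). -/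
lemma comm_mem_deep (p : ℕ) (hp : p.Prime) [Finite G] (hpow : IsPowerful p G) (j : ℕ) :
    ∀ w ∈ subgroupPow G (p ^ j), ∀ x : G,
      ⁅w, x⁆ ∈ subgroupPow G (p ^ (j + if p = 2 then 2 else 1)) := by
  intro w hw x
  set N := subgroupPow G (p ^ (j + if p = 2 then 2 else 1)) with hN
  have hexpQ : ∀ q : G ⧸ N, q ^ p ^ (j + if p = 2 then 2 else 1) = 1 := by
    intro q
    obtain ⟨b, rfl⟩ := QuotientGroup.mk_surjective q
    have : ((b ^ p ^ (j + if p = 2 then 2 else 1) : G) : G ⧸ N) = 1 :=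
      (QuotientGroup.eq_one_iff _).2 (pow_mem_subgroupPow b _)
    simpa using this
  have hQ := key_central p hp j (Nat.card (G ⧸ N)) (G ⧸ N) le_rfl
    (isPowerful_quotient hpow N) hexpQ (↑w) (mk_mem_subgroupPow hw)
  exact comm_mem_of_center_quotient hQ x

/-- L6 : elementwise `p`-th powers go one level deeper. -/
lemma pow_mem_deep (p : ℕ) (hp : p.Prime) [Finite G] (hpow : IsPowerful p G) (j : ℕ) :
    ∀ w ∈ subgroupPow G (p ^ j), w ^ p ∈ subgroupPow G (p ^ (j + 1)) := by
  intro w hw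
  set N := subgroupPow G (p ^ (j + 1)) with hN
  have hdeep : ∀ u ∈ subgroupPow G (p ^ j), ∀ v : G, ⁅u, v⁆ ∈ N := by
    intro u hu v
    refine subgroupPow_le _ _ ⟨p ^ ((if p = 2 then 2 else 1) - 1), ?_⟩
      (comm_mem_deep p hp hpow j u hu v)
    rw [← pow_add]
    congr 1
    split_ifs <;> omega
  suffices hq : ((w ^ p : G) : G ⧸ N) = 1 by
    rwa [QuotientGroup.eq_one_iff] at hq
  induction hw using Subgroup.closure_induction with
  | mem v hv =>
      obtain ⟨g, rfl⟩ := hv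
      rw [QuotientGroup.eq_one_iff, ← pow_mul, ← pow_succ]
      exact pow_mem_subgroupPow g _
  | one => simp
  | mul u v hu hv ihu ihv =>
      have hcomm : Commute ((u : G) : G ⧸ N) ((v : G) : G ⧸ N) := by
        have h1 : ((⁅u, v⁆ : G) : G ⧸ N) = 1 := (QuotientGroup.eq_one_iff _).2 (hdeep u hu v)
        exact commutatorElement_eq_one_iff_commute.1 h1
      have : (((u * v : G) ^ p : G) : G ⧸ N)
          = (((u ^ p : G)) : G ⧸ N) * (((v ^ p : G)) : G ⧸ N) := by
        rw [QuotientGroup.mk_pow, QuotientGroup.mk_mul, hcomm.mul_pow p,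
          QuotientGroup.mk_pow, QuotientGroup.mk_pow]
      rw [this, ihu, ihv, one_mul]
  | inv u hu ihu =>
      have : (((u⁻¹ : G) ^ p : G) : G ⧸ N) = (((u ^ p : G) : G ⧸ N))⁻¹ := by
        rw [inv_pow]; rfl
      rw [this, ihu, inv_one]

/-- E : exponent of `G^{p^j}` divides `p^(e-j)`. -/
lemma exp_deep (p : ℕ) (hp : p.Prime) [Finite G] (hpow : IsPowerful p G) (e : ℕ)
    (hexp : ∀ g : G, g ^ p ^ e = 1) :
    ∀ (t j : ℕ), e ≤ j + t → ∀ w ∈ subgroupPow G (p ^ j), w ^ p ^ t = 1 := by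
  intro t
  induction t with
  | zero =>
      intro j hj w hw
      have hbot : subgroupPow G (p ^ j) = ⊥ := by
        apply subgroupPow_eq_bot
        intro g
        have : p ^ j = p ^ e * p ^ (j - e) := by rw [← pow_add]; congr 1; omega
        rw [this, pow_mul, hexp g, one_pow]
      rw [hbot, Subgroup.mem_bot] at hw
      simp [hw]
  | succ t iht =>
      intro j hj w hw
      have h1 : w ^ p ∈ subgroupPow G (p ^ (j + 1)) := pow_mem_deep p hp hpow j w hw
      have h2 : (w ^ p) ^ p ^ t = 1 := iht (j + 1) (by omega) _ h1
      rw [pow_succ', pow_mul]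
      exact h2

def conjProd (x y : G) : ℕ → G
  | 0 => 1
  | n + 1 => (x ^ n)⁻¹ * y * x ^ n * conjProd x y n

lemma mul_pow_eq_conjProd (x y : G) (n : ℕ) : (x * y) ^ n = x ^ n * conjProd x y n := by
  induction n with
  | zero => simp [conjProd]
  | succ n ih =>
      rw [pow_succ' (x * y), ih, conjProd]
      group

lemma conjProd_eq_of_central {x y c : G} (hc : x⁻¹ * y * x = y * c)
    (hcent : ∀ z : G, c * z = z * c) (n : ℕ) :
    conjProd x y n = y ^ n * c ^ n.choose 2 := by
  have hconj : ∀ k : ℕ, (x ^ k)⁻¹ * y * x ^ k = y * c ^ k := by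
    intro k
    induction k with
    | zero => simp
    | succ k ih =>
        have h1 : (x ^ (k + 1))⁻¹ * y * x ^ (k + 1) = x⁻¹ * ((x ^ k)⁻¹ * y * x ^ k) * x := by
          rw [pow_succ]; group
        rw [h1, ih, ← mul_assoc x⁻¹ y (c ^ k), mul_assoc (x⁻¹ * y) (c ^ k) x,
          centpow hcent k x, ← mul_assoc (x⁻¹ * y) x (c ^ k), hc]
        group
  induction n with
  | zero => simp [conjProd]
  | succ n ih =>
      have hC : (n + 1).choose 2 = n.choose 2 + n := by
        rw [Nat.choose_succ_succ]; simp [Nat.choose_one_right, Nat.add_comm]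
      rw [conjProd, hconj n, ih, hC, mul_assoc y (c ^ n), ← mul_assoc (c ^ n) (y ^ n),
        centpow hcent n (y ^ n), pow_add]
      group

lemma conjProd_mk {N : Subgroup G} [N.Normal] (x y : G) (n : ℕ) :
    ((conjProd x y n : G) : G ⧸ N) = conjProd ((x : G ⧸ N)) ((y : G ⧸ N)) n := by
  induction n with
  | zero => rfl
  | succ n ih =>
      rw [conjProd, conjProd, ← ih]
      simp [QuotientGroup.mk_mul, QuotientGroup.mk_inv, QuotientGroup.mk_pow]


theorem stmt13 (p : ℕ) (hp : p.Prime) (G : Type*) [Group G] [Finite G]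
    (hpG : IsPGroup p G) (hpow : IsPowerful p G) (e : ℕ)
    (hexp : Monoid.exponent G = p ^ e) (i : ℕ) (hi : i < e)
    (x : G) (y : G) (hy : y ∈ subgroupPow G (p ^ (e - i - 1))) :
    (x * y) ^ p ^ i = x ^ p ^ i * y ^ p ^ i := by
  have hexpG : ∀ g : G, g ^ p ^ e = 1 := by
    intro g
    rw [← hexp]
    exact Monoid.pow_exponent_eq_one g
  clear hexp hpG
  suffices H : ∀ i : ℕ, i < e → ∀ x y : G, y ∈ subgroupPow G (p ^ (e - i - 1)) →
      (x * y) ^ p ^ i = x ^ p ^ i * y ^ p ^ i from H i hi x y hy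
  clear hi hy x y i
  intro i
  induction i with
  | zero => intro _ x y _; simp
  | succ i ih =>
      intro hi x y hy
      have hie : i + 2 ≤ e := hi
      have hilt : i < e := by omega
      set kp := (if p = 2 then 2 else 1) with hkp
      have harith : e - (i + 1) - 1 = e - i - 2 := by omega
      rw [harith] at hy
      -- the basic commutator
      set c := y⁻¹ * x⁻¹ * y * x with hcdef
      have hc_eq : c = ⁅y⁻¹, x⁻¹⁆ := by
        rw [hcdef, commutatorElement_def, inv_inv, inv_inv]
      have hcdeep : c ∈ subgroupPow G (p ^ (e - i - 2 + kp)) := by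
        rw [hc_eq]
        exact comm_mem_deep p hp hpow (e - i - 2) y⁻¹ (Subgroup.inv_mem _ hy) x⁻¹
      have hcmem : c ∈ subgroupPow G (p ^ (e - i - 1)) := by
        refine subgroupPow_le _ _ ⟨p ^ (e - i - 2 + kp - (e - i - 1)), ?_⟩ hcdeep
        rw [← pow_add]
        congr 1
        have : 1 ≤ kp := by rw [hkp]; split_ifs <;> omega
        omega
      -- work modulo N = G^{p^(e-i)}
      set N := subgroupPow G (p ^ (e - i)) with hNdef
      have hccent : ∀ z : G ⧸ N, ((c : G) : G ⧸ N) * z = z * ((c : G) : G ⧸ N) := by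
        have hmem : ((c : G) : G ⧸ N) ∈ Subgroup.center (G ⧸ N) := by
          apply center_quotient_of_comm
          intro z
          refine subgroupPow_le _ _ ⟨p ^ (e - i - 1 + kp - (e - i)), ?_⟩
            (comm_mem_deep p hp hpow (e - i - 1) c hcmem z)
          rw [← pow_add]
          congr 1
          have : 1 ≤ kp := by rw [hkp]; split_ifs <;> omega
          omega
        intro z
        exact ((Subgroup.mem_center_iff.1 hmem) z).symm
      have hxyx : x⁻¹ * y * x = y * c := by rw [hcdef]; group
      have hxyxQ : ((x : G ⧸ N))⁻¹ * (y : G ⧸ N) * (x : G ⧸ N)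
          = (y : G ⧸ N) * ((c : G) : G ⧸ N) := by
        rw [← QuotientGroup.mk_inv, ← QuotientGroup.mk_mul, ← QuotientGroup.mk_mul,
          hxyx, QuotientGroup.mk_mul]
      have hprodQ : ((conjProd x y p : G) : G ⧸ N)
          = ((y : G ⧸ N)) ^ p * ((c : G) : G ⧸ N) ^ p.choose 2 := by
        rw [conjProd_mk, conjProd_eq_of_central hxyxQ hccent p]
      set u := (y ^ p * c ^ p.choose 2)⁻¹ * conjProd x y p with hudef
      have humem : u ∈ N := by
        rw [← QuotientGroup.eq_one_iff, hudef, QuotientGroup.mk_mul, QuotientGroup.mk_inv,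
          hprodQ, QuotientGroup.mk_mul, QuotientGroup.mk_pow, QuotientGroup.mk_pow]
        group
      have hsplit : conjProd x y p = y ^ p * (c ^ p.choose 2 * u) := by
        rw [hudef]
        group
      -- memberships at level e - i - 1
      have hyp : y ^ p ∈ subgroupPow G (p ^ (e - i - 1)) := by
        have := pow_mem_deep p hp hpow (e - i - 2) y hy
        rwa [show e - i - 2 + 1 = e - i - 1 from by omega] at this
      have hcC : c ^ p.choose 2 ∈ subgroupPow G (p ^ (e - i - 1)) :=
        Subgroup.pow_mem _ hcmem _
      have hulev : u ∈ subgroupPow G (p ^ (e - i - 1)) := by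
        refine subgroupPow_le _ _ ⟨p, ?_⟩ humem
        rw [← pow_succ, show e - i - 1 + 1 = e - i from by omega]
      -- assemble
      have expand : (x * y) ^ p ^ (i + 1) = ((x * y) ^ p) ^ p ^ i := by
        rw [← pow_mul, ← pow_succ']
      rw [expand, mul_pow_eq_conjProd, hsplit]
      rw [ih hilt (x ^ p) (y ^ p * (c ^ p.choose 2 * u))
        (Subgroup.mul_mem _ hyp (Subgroup.mul_mem _ hcC hulev))]
      rw [ih hilt (y ^ p) (c ^ p.choose 2 * u) (Subgroup.mul_mem _ hcC hulev)]
      rw [ih hilt (c ^ p.choose 2) u hulev]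
      have hu1 : u ^ p ^ i = 1 :=
        exp_deep p hp hpow e hexpG i (e - i) (by omega) u humem
      have hc1 : (c ^ p.choose 2) ^ p ^ i = 1 := by
        by_cases hp2 : p = 2
        · have hcN : c ∈ N := by
            rw [hNdef]
            refine subgroupPow_le _ _ ⟨1, ?_⟩ hcdeep
            rw [mul_one]
            congr 1
            rw [hkp, if_pos hp2]
            omega
          have : c ^ p ^ i = 1 := exp_deep p hp hpow e hexpG i (e - i) (by omega) c hcN
          rw [← pow_mul, mul_comm, pow_mul, this, one_pow]
        · have hcp : c ^ p ^ (i + 1) = 1 :=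
            exp_deep p hp hpow e hexpG (i + 1) (e - i - 1) (by omega) c hcmem
          have hpodd : 2 < p := by
            rcases hp.two_le.lt_or_eq with h | h
            · exact h
            · exact absurd h.symm hp2
          obtain ⟨t, ht⟩ := hp.dvd_choose_self (by norm_num) hpodd
          rw [← pow_mul, ht, show p * t * p ^ i = p ^ (i + 1) * t from by ring, pow_mul,
            hcp, one_pow]
      rw [hu1, hc1, one_mul, mul_one, ← pow_mul, ← pow_mul,
        show p * p ^ i = p ^ (i + 1) from by ring]
end

section
/- Let G be a powerful finite p-group of exponent p^e. Then the map x ↦ x^{p^{e-1}} is a group homomorphism from G onto G^{p^{e-1}}, and consequently the number of elements of G of order at most p^{e-1} equals the index |G : G^{p^{e-1}}|. -/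
namespace Stmt14Aux

open Subgroup Function

variable {G : Type*} [Group G]

theorem mem_spow (n : ℕ) (g : G) : g ^ n ∈ subgroupPow G n :=
  Subgroup.subset_closure ⟨g, rfl⟩

theorem mem_spow_iff_closure {n : ℕ} {g : G} :
    g ∈ subgroupPow G n ↔ g ∈ Subgroup.closure {x : G | ∃ g : G, g ^ n = x} := Iff.rfl

theorem conj_pow_eq (x a : G) (k : ℕ) : (x⁻¹ * a * x) ^ k = x⁻¹ * a ^ k * x := by
  induction k with
  | zero => simp
  | succ k ih => rw [pow_succ, ih, pow_succ]; group

theorem spow_normal (n : ℕ) : (subgroupPow G n).Normal := by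
  constructor
  intro x hx g
  have hx' : x ∈ Subgroup.closure {x : G | ∃ g : G, g ^ n = x} := hx
  clear hx
  induction hx' using Subgroup.closure_induction with
  | mem y hy =>
      obtain ⟨h, rfl⟩ := hy
      have hc : g * h ^ n * g⁻¹ = (g * h * g⁻¹) ^ n := by
        have := conj_pow_eq g⁻¹ h n
        simpa using this.symm
      rw [hc]
      exact Subgroup.subset_closure ⟨g * h * g⁻¹, rfl⟩
  | one => rw [mul_one, mul_inv_cancel]; exact one_mem _
  | mul u v hu hv ihu ihv =>
      have : g * (u * v) * g⁻¹ = (g * u * g⁻¹) * (g * v * g⁻¹) := by group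
      rw [this]; exact mul_mem ihu ihv
  | inv u hu ihu =>
      have : g * u⁻¹ * g⁻¹ = (g * u * g⁻¹)⁻¹ := by group
      rw [this]; exact inv_mem ihu

theorem spow_map_le {K : Type*} [Group K] (f : G →* K) (n : ℕ) :
    (subgroupPow G n).map f ≤ subgroupPow K n := by
  rw [subgroupPow, MonoidHom.map_closure]
  refine (Subgroup.closure_le _).mpr ?_
  rintro _ ⟨_, ⟨g, rfl⟩, rfl⟩
  have : f (g ^ n) = (f g) ^ n := map_pow f g n
  rw [this]
  exact mem_spow n (f g)

theorem isPowerful_of_surjective {K : Type*} [Group K] (f : G →* K) (hf : Surjective f)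
    {p : ℕ} (h : IsPowerful p G) : IsPowerful p K := by
  have key : ∀ n : ℕ, commutator G ≤ subgroupPow G n → commutator K ≤ subgroupPow K n := by
    intro n hn
    have hck : commutator K = (commutator G).map f := by
      rw [commutator_def K, commutator_def G, Subgroup.map_commutator,
        Subgroup.map_top_of_surjective f hf]
    rw [hck]
    exact le_trans (Subgroup.map_mono hn) (spow_map_le f n)
  unfold IsPowerful at h ⊢
  split_ifs at h ⊢ with h2
  · exact key 4 h
  · exact key p h

theorem conj_iter (a x t : G) (ht : ∀ y : G, t * y = y * t)
    (h : x⁻¹ * a * x = a * t) : ∀ k : ℕ, (x ^ k)⁻¹ * a * x ^ k = a * t ^ k := by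
  intro k; induction k with
  | zero => simp
  | succ k ih =>
      have htk : ∀ y : G, t ^ k * y = y * t ^ k :=
        fun y => ((show Commute t y from ht y).pow_left k).eq
      have hx : x⁻¹ * t ^ k * x = t ^ k := by
        rw [mul_assoc, htk x, inv_mul_cancel_left]
      calc (x ^ (k+1))⁻¹ * a * x ^ (k+1)
          = x⁻¹ * ((x ^ k)⁻¹ * a * x ^ k) * x := by rw [pow_succ]; group
        _ = x⁻¹ * (a * t ^ k) * x := by rw [ih]
        _ = (x⁻¹ * a * x) * (x⁻¹ * t ^ k * x) := by group
        _ = (a * t) * t ^ k := by rw [h, hx]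
        _ = a * t ^ (k+1) := by rw [pow_succ', mul_assoc]

theorem class2_pow (a d ζ : G) (hζ : ∀ y : G, ζ * y = y * ζ)
    (hconj : a⁻¹ * d * a = d * ζ) :
    ∀ k : ℕ, (a * d) ^ k = a ^ k * d ^ k * ζ ^ (k.choose 2) := by
  have hck : ∀ (j : ℕ) (y : G), ζ ^ j * y = y * ζ ^ j :=
    fun j y => ((show Commute ζ y from hζ y).pow_left j).eq
  have hconjk : ∀ k : ℕ, a⁻¹ * d ^ k * a = d ^ k * ζ ^ k := by
    intro k; induction k with
    | zero => simp
    | succ k ih =>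
        calc a⁻¹ * d ^ (k+1) * a
            = (a⁻¹ * d ^ k * a) * (a⁻¹ * d * a) := by rw [pow_succ]; group
          _ = (d ^ k * ζ ^ k) * (d * ζ) := by rw [ih, hconj]
          _ = d ^ k * ((ζ ^ k * d) * ζ) := by group
          _ = d ^ k * ((d * ζ ^ k) * ζ) := by rw [hck k d]
          _ = d ^ (k+1) * ζ ^ (k+1) := by rw [pow_succ, pow_succ]; group
  intro k; induction k with
  | zero => simp
  | succ k ih =>
      have hchoose : (k+1).choose 2 = k.choose 2 + k := by
        have h := Nat.choose_succ_succ k 1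
        norm_num at h
        omega
      calc (a * d) ^ (k+1)
          = (a * d) ^ k * (a * d) := pow_succ _ _
        _ = (a ^ k * d ^ k * ζ ^ (k.choose 2)) * (a * d) := by rw [ih]
        _ = a ^ k * d ^ k * ((ζ ^ (k.choose 2) * a) * d) := by group
        _ = a ^ k * d ^ k * ((a * ζ ^ (k.choose 2)) * d) := by rw [hck _ a]
        _ = a ^ k * d ^ k * (a * (ζ ^ (k.choose 2) * d)) := by group
        _ = a ^ k * d ^ k * (a * (d * ζ ^ (k.choose 2))) := by rw [hck _ d]
        _ = a ^ k * (a * (a⁻¹ * d ^ k * a)) * d * ζ ^ (k.choose 2) := by group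
        _ = a ^ k * (a * (d ^ k * ζ ^ k)) * d * ζ ^ (k.choose 2) := by rw [hconjk k]
        _ = a ^ (k+1) * (d ^ k * (ζ ^ k * d)) * ζ ^ (k.choose 2) := by rw [pow_succ]; group
        _ = a ^ (k+1) * (d ^ k * (d * ζ ^ k)) * ζ ^ (k.choose 2) := by rw [hck k d]
        _ = a ^ (k+1) * d ^ (k+1) * (ζ ^ k * ζ ^ (k.choose 2)) := by
              rw [pow_succ, pow_succ]; group
        _ = a ^ (k+1) * d ^ (k+1) * ζ ^ ((k+1).choose 2) := by
              rw [← pow_add, hchoose, Nat.add_comm k (k.choose 2)]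

theorem choose_pow_eq_one {p : ℕ} (hp : p.Prime) (hp2 : p ≠ 2) {t : G} (ht : t ^ p = 1) :
    t ^ (p.choose 2) = 1 := by
  obtain ⟨mm, hmm⟩ : ∃ mm, p = 2 * mm + 1 := hp.odd_of_ne_two hp2
  have hch : p.choose 2 = p * mm := by
    rw [Nat.choose_two_right]
    rw [hmm]
    have h1 : 2 * mm + 1 - 1 = 2 * mm := by omega
    rw [h1]
    have h2 : (2 * mm + 1) * (2 * mm) = ((2 * mm + 1) * mm) * 2 := by ring
    rw [h2, Nat.mul_div_cancel _ (by norm_num)]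
  rw [hch, pow_mul, ht, one_pow]

theorem comm_conj_one {H : Type*} [Group H] (X Y : H) (hb : X * Y = Y * X) :
    X⁻¹ * (Y⁻¹ * X * Y) = 1 := by
  have h1 : Y⁻¹ * X * Y = X := by rw [mul_assoc, hb, inv_mul_cancel_left]
  rw [h1, inv_mul_cancel]

end Stmt14Aux

open scoped commutatorElement in
open Stmt14Aux Subgroup Function in
theorem stmt14_aux (p : ℕ) (hp : p.Prime) : ∀ (e n : ℕ) (G : Type u) [Group G] [Finite G],
    Nat.card G ≤ n → IsPowerful p G → Monoid.exponent G ∣ p ^ e →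
    (∀ x y : G, (x * y) ^ p ^ (e - 1) = x ^ p ^ (e - 1) * y ^ p ^ (e - 1)) ∧
    (∀ g x : G, g ^ p ^ (e - 1) * x = x * g ^ p ^ (e - 1)) := by
  intro e
  induction e using Nat.strong_induction_on with
  | _ e IHe =>
  intro n
  induction n with
  | zero =>
      intro G _ _ hcard _ _
      have := Nat.card_pos (α := G)
      omega
  | succ n IHN =>
      intro G _ _ hcard hpow hexp
      have hpe1 : ∀ g : G, g ^ p ^ e = 1 := by
        intro g
        obtain ⟨c, hc⟩ := hexp
        rw [hc, pow_mul, Monoid.pow_exponent_eq_one, one_pow]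
      have habelian : (∀ x y : G, x * y = y * x) →
          (∀ x y : G, (x * y) ^ p ^ (e - 1) = x ^ p ^ (e - 1) * y ^ p ^ (e - 1)) ∧
          (∀ g x : G, g ^ p ^ (e - 1) * x = x * g ^ p ^ (e - 1)) := by
        intro hc
        refine ⟨fun x y => ?_, fun g x => hc _ _⟩
        exact (show Commute x y from hc x y).mul_pow _
      have hbot : ∀ nn : ℕ, (∀ g : G, g ^ nn = 1) → subgroupPow G nn ≤ ⊥ := by
        intro nn h
        rw [subgroupPow]
        refine (Subgroup.closure_le _).mpr ?_
        rintro _ ⟨g, rfl⟩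
        simp only [SetLike.mem_coe, Subgroup.mem_bot, h g]
      have h42 : subgroupPow G 4 ≤ subgroupPow G 2 := by
        rw [subgroupPow]
        refine (Subgroup.closure_le _).mpr ?_
        rintro _ ⟨g, rfl⟩
        have h4 : g ^ 4 = (g ^ 2) ^ 2 := by rw [← pow_mul]
        rw [h4]
        exact mem_spow 2 (g ^ 2)
      have hcommp : commutator G ≤ subgroupPow G p := by
        unfold IsPowerful at hpow
        split_ifs at hpow with h2
        · subst h2; exact hpow.trans h42
        · exact hpow
      have hcomm_of : commutator G ≤ ⊥ → ∀ x y : G, x * y = y * x := by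
        intro hle x y
        have hxy : ⁅x, y⁆ ∈ commutator G :=
          Subgroup.commutator_mem_commutator (Subgroup.mem_top x) (Subgroup.mem_top y)
        have h1 : ⁅x, y⁆ = 1 := by simpa using hle hxy
        exact commutatorElement_eq_one_iff_mul_comm.mp h1
      rcases e with _ | e
      · -- e = 0 : G is trivial
        apply habelian
        intro x y
        have h1 : ∀ g : G, g = 1 := fun g => by simpa using hpe1 g
        rw [h1 x, h1 y]
      rcases e with _ | m
      · -- e = 1 : G is abelian
        apply habelian
        apply hcomm_of
        refine hcommp.trans (hbot p ?_)
        intro g; simpa using hpe1 g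
      -- e = m + 2
      by_cases hpm : p = 2 ∧ m = 0
      · -- exponent divides 4, p = 2 : G is abelian
        obtain ⟨hp2, hm0⟩ := hpm
        subst hp2; subst hm0
        apply habelian
        apply hcomm_of
        unfold IsPowerful at hpow
        rw [if_pos rfl] at hpow
        refine hpow.trans (hbot 4 ?_)
        intro g; simpa using hpe1 g
      show (∀ x y : G, (x * y) ^ p ^ (m+1) = x ^ p ^ (m+1) * y ^ p ^ (m+1)) ∧
          (∀ g x : G, g ^ p ^ (m+1) * x = x * g ^ p ^ (m+1))
      by_cases hq1 : ∀ g : G, g ^ p ^ (m+1) = 1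
      · constructor
        · intro x y; rw [hq1, hq1, hq1, one_mul]
        · intro g x; rw [hq1, one_mul, mul_one]
      push_neg at hq1
      obtain ⟨g₀, hg₀⟩ := hq1
      haveI : Nontrivial G := ⟨⟨g₀ ^ p ^ (m+1), 1, hg₀⟩⟩
      haveI : Fact p.Prime := ⟨hp⟩
      have hpG : IsPGroup p G := fun g => ⟨m + 2, hpe1 g⟩
      obtain ⟨z, hzmem, hzne⟩ : ∃ z : G, z ∈ Subgroup.center G ∧ z ≠ 1 := by
        haveI := hpG.center_nontrivial
        obtain ⟨u, hu⟩ := exists_ne (1 : Subgroup.center G)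
        exact ⟨u, u.2, fun h' => hu (Subtype.ext h')⟩
      have hordred : ∀ (k : ℕ) (w : G), w ≠ 1 → w ^ p ^ k = 1 →
          ∃ j : ℕ, w ^ j ≠ 1 ∧ (w ^ j) ^ p = 1 := by
        intro k
        induction k with
        | zero =>
            intro w hw hw1
            simp only [pow_zero, pow_one] at hw1
            exact absurd hw1 hw
        | succ k ih =>
            intro w hw hw1
            by_cases h : w ^ p ^ k = 1
            · exact ih w hw h
            · refine ⟨p ^ k, h, ?_⟩
              rw [← pow_mul, ← pow_succ]
              exact hw1
      obtain ⟨j, hzj_ne, hzjp⟩ := hordred (m+2) z hzne (hpe1 z)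
      set w : G := z ^ j with hw
      have hwc : ∀ y : G, w * y = y * w :=
        fun y => (Subgroup.mem_center_iff.mp (pow_mem hzmem j) y).symm
      set Z : Subgroup G := Subgroup.zpowers w with hZ
      have hZcomm : ∀ t ∈ Z, ∀ y : G, t * y = y * t := by
        intro t ht y
        obtain ⟨k, rfl⟩ := Subgroup.mem_zpowers_iff.mp ht
        exact ((show Commute w y from hwc y).zpow_left k).eq
      have hZp : ∀ t ∈ Z, t ^ p = 1 := by
        intro t ht
        obtain ⟨k, rfl⟩ := Subgroup.mem_zpowers_iff.mp ht
        have h1 : (w ^ k) ^ (p : ℕ) = (w ^ (p : ℕ)) ^ k := by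
          rw [← zpow_natCast (w ^ k) p, ← zpow_mul,
            show k * (p : ℤ) = (p : ℤ) * k from mul_comm _ _, zpow_mul, zpow_natCast]
        rw [h1, hzjp, one_zpow]
      haveI hZnormal : Z.Normal := by
        constructor
        intro t ht g
        rw [← hZcomm t ht g, mul_inv_cancel_right]
        exact ht
      set π1 := QuotientGroup.mk' Z with hπ1
      have hπ1s : Function.Surjective π1 := QuotientGroup.mk'_surjective Z
      have hcard1 : Nat.card (G ⧸ Z) ≤ n := by
        have h1 : Nat.card G = Nat.card (G ⧸ Z) * Nat.card Z :=
          Subgroup.card_eq_card_quotient_mul_card_subgroup Z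
        have h2 : 1 < Nat.card Z := by
          haveI : Nontrivial Z := ⟨⟨⟨w, Subgroup.mem_zpowers w⟩, 1,
            fun h' => hzj_ne (by simpa using congrArg Subtype.val h')⟩⟩
          exact Finite.one_lt_card
        have h3 : 0 < Nat.card (G ⧸ Z) := Nat.card_pos
        have h4 : Nat.card (G ⧸ Z) * 2 ≤ Nat.card (G ⧸ Z) * Nat.card Z :=
          Nat.mul_le_mul_left _ h2
        omega
      have hexp1 : Monoid.exponent (G ⧸ Z) ∣ p ^ (m+2) := by
        apply Monoid.exponent_dvd_of_forall_pow_eq_one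
        intro x
        induction x using QuotientGroup.induction_on with
        | _ g =>
            show (π1 g) ^ p ^ (m+2) = 1
            rw [← map_pow, hpe1 g, map_one]
      obtain ⟨A1, B1⟩ := IHN (G ⧸ Z) hcard1 (isPowerful_of_surjective π1 hπ1s hpow) hexp1
      rw [show m + 2 - 1 = m + 1 from rfl] at A1 B1
      -- generators of G^{p^(m+1)} are central modulo Z
      have hK1 : ∀ gg y : G, ∃ t ∈ Z, y⁻¹ * gg ^ p ^ (m+1) * y = gg ^ p ^ (m+1) * t := by
        intro gg y
        refine ⟨(gg ^ p ^ (m+1))⁻¹ * (y⁻¹ * gg ^ p ^ (m+1) * y), ?_, ?_⟩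
        · rw [← QuotientGroup.eq_one_iff]
          show π1 ((gg ^ p ^ (m+1))⁻¹ * (y⁻¹ * gg ^ p ^ (m+1) * y)) = 1
          simp only [map_mul, map_inv, map_pow]
          exact comm_conj_one _ _ (B1 (π1 gg) (π1 y))
        · group
      have hK2 : ∀ gg y : G, gg ^ p ^ (m+1) * y ^ p = y ^ p * gg ^ p ^ (m+1) := by
        intro gg y
        obtain ⟨t, htZ, ht⟩ := hK1 gg y
        have hiter := conj_iter (gg ^ p ^ (m+1)) y t (fun u => hZcomm t htZ u) ht p
        rw [hZp t htZ, mul_one] at hiter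
        calc gg ^ p ^ (m+1) * y ^ p
            = y ^ p * ((y ^ p)⁻¹ * gg ^ p ^ (m+1) * y ^ p) := by group
          _ = y ^ p * gg ^ p ^ (m+1) := by rw [hiter]
      have hK3 : ∀ nn : G, nn ∈ subgroupPow G (p ^ (m+1)) → ∀ y : G, Commute nn (y ^ p) := by
        intro nn hnn
        have hnn' : nn ∈ Subgroup.closure {x : G | ∃ g : G, g ^ p ^ (m+1) = x} := hnn
        clear hnn
        induction hnn' using Subgroup.closure_induction with
        | mem u hu =>
            obtain ⟨gg, rfl⟩ := hu
            intro y
            exact hK2 gg y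
        | one => intro y; exact Commute.one_left _
        | mul u v hu hv ihu ihv => intro y; exact (ihu y).mul_left (ihv y)
        | inv u hu ihu => intro y; exact (ihu y).inv_left
      have hNab : ∀ a ∈ subgroupPow G (p ^ (m+1)), ∀ b ∈ subgroupPow G (p ^ (m+1)),
          Commute a b := by
        intro a ha b hb
        have hb' : b ∈ Subgroup.closure {x : G | ∃ g : G, g ^ p ^ (m+1) = x} := hb
        clear hb
        induction hb' using Subgroup.closure_induction with
        | mem u hu =>
            obtain ⟨gg, rfl⟩ := hu
            have h1 : (gg ^ p ^ m) ^ p = gg ^ p ^ (m+1) := by rw [← pow_mul, ← pow_succ]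
            rw [← h1]
            exact hK3 a ha (gg ^ p ^ m)
        | one => exact Commute.one_right _
        | mul u v hu hv ihu ihv => exact ihu.mul_right ihv
        | inv u hu ihu => exact ihu.inv_right
      have hNp : ∀ nn ∈ subgroupPow G (p ^ (m+1)), nn ^ p = 1 := by
        intro nn hnn
        have hnn' : nn ∈ Subgroup.closure {x : G | ∃ g : G, g ^ p ^ (m+1) = x} := hnn
        clear hnn
        induction hnn' using Subgroup.closure_induction with
        | mem u hu =>
            obtain ⟨gg, rfl⟩ := hu
            rw [← pow_mul, ← pow_succ]
            exact hpe1 gg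
        | one => exact one_pow _
        | mul u v hu hv ihu ihv =>
            rw [(hNab u hu v hv).mul_pow, ihu, ihv, one_mul]
        | inv u hu ihu => rw [inv_pow, ihu, inv_one]
      haveI hNnorm : (subgroupPow G (p ^ (m+1))).Normal := spow_normal _
      set π2 := QuotientGroup.mk' (subgroupPow G (p ^ (m+1))) with hπ2
      have hexp2 : Monoid.exponent (G ⧸ subgroupPow G (p ^ (m+1))) ∣ p ^ (m+1) := by
        apply Monoid.exponent_dvd_of_forall_pow_eq_one
        intro x
        induction x using QuotientGroup.induction_on with
        | _ g =>
            show (π2 g) ^ p ^ (m+1) = 1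
            rw [← map_pow]
            exact (QuotientGroup.eq_one_iff _).mpr (mem_spow _ g)
      obtain ⟨A2, B2⟩ := IHe (m+1) (by omega) (Nat.card (G ⧸ subgroupPow G (p ^ (m+1))))
        (G ⧸ subgroupPow G (p ^ (m+1))) le_rfl
        (isPowerful_of_surjective π2 (QuotientGroup.mk'_surjective _) hpow) hexp2
      rw [show m + 1 - 1 = m from rfl] at A2 B2
      -- p^m-th powers are central modulo G^{p^(m+1)}
      have hD : ∀ gg y : G,
          (gg ^ p ^ m)⁻¹ * (y⁻¹ * gg ^ p ^ m * y) ∈ subgroupPow G (p ^ (m+1)) := by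
        intro gg y
        rw [← QuotientGroup.eq_one_iff]
        show π2 ((gg ^ p ^ m)⁻¹ * (y⁻¹ * gg ^ p ^ m * y)) = 1
        simp only [map_mul, map_inv, map_pow]
        exact comm_conj_one _ _ (B2 (π2 gg) (π2 y))
      -- part (b) : q-th powers are central
      have hB : ∀ gg x : G, gg ^ p ^ (m+1) * x = x * gg ^ p ^ (m+1) := by
        intro gg x
        have haq : (gg ^ p ^ m) ^ p = gg ^ p ^ (m+1) := by rw [← pow_mul, ← pow_succ]
        have hdN : (gg ^ p ^ m)⁻¹ * (x⁻¹ * gg ^ p ^ m * x) ∈ subgroupPow G (p ^ (m+1)) :=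
          hD gg x
        set a : G := gg ^ p ^ m with ha
        set d : G := a⁻¹ * (x⁻¹ * a * x) with hd
        have hconj : x⁻¹ * a * x = a * d := (mul_inv_cancel_left _ _).symm
        obtain ⟨ζ, hζc, hζch, hζconj⟩ :
            ∃ ζ : G, (∀ y : G, ζ * y = y * ζ) ∧ ζ ^ (p.choose 2) = 1 ∧ a⁻¹ * d * a = d * ζ := by
          by_cases hp2 : p = 2
          · have hm1 : 1 ≤ m := by
              rcases Nat.eq_zero_or_pos m with h | h
              · exact absurd ⟨hp2, h⟩ hpm
              · omega
            refine ⟨1, by simp, one_pow _, ?_⟩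
            have hay : (gg ^ p ^ (m-1)) ^ p = a := by
              rw [ha, ← pow_mul, ← pow_succ, Nat.sub_add_cancel hm1]
            have hcom : Commute d ((gg ^ p ^ (m-1)) ^ p) := hK3 d hdN _
            rw [hay] at hcom
            rw [mul_one, mul_assoc, hcom.eq, inv_mul_cancel_left]
          · have hNZ : ∀ nn ∈ subgroupPow G (p ^ (m+1)), ∀ y : G,
                ∃ t ∈ Z, y⁻¹ * nn * y = nn * t := by
              intro nn hnn
              have hnn' : nn ∈ Subgroup.closure {x : G | ∃ g : G, g ^ p ^ (m+1) = x} := hnn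
              clear hnn
              induction hnn' using Subgroup.closure_induction with
              | mem u hu =>
                  obtain ⟨gg', rfl⟩ := hu
                  intro y; exact hK1 gg' y
              | one => intro y; exact ⟨1, one_mem _, by simp⟩
              | mul u v hu hv ihu ihv =>
                  intro y
                  obtain ⟨t1, ht1, e1⟩ := ihu y
                  obtain ⟨t2, ht2, e2⟩ := ihv y
                  refine ⟨t1 * t2, mul_mem ht1 ht2, ?_⟩
                  calc y⁻¹ * (u * v) * y
                      = (y⁻¹ * u * y) * (y⁻¹ * v * y) := by group
                    _ = (u * t1) * (v * t2) := by rw [e1, e2]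
                    _ = u * ((t1 * v) * t2) := by group
                    _ = u * ((v * t1) * t2) := by rw [hZcomm t1 ht1 v]
                    _ = u * v * (t1 * t2) := by group
              | inv u hu ihu =>
                  intro y
                  obtain ⟨t, ht, e⟩ := ihu y
                  refine ⟨t⁻¹, inv_mem ht, ?_⟩
                  have h1 : y⁻¹ * u⁻¹ * y = (y⁻¹ * u * y)⁻¹ := by group
                  rw [h1, e, mul_inv_rev, hZcomm t⁻¹ (inv_mem ht) u⁻¹]
            obtain ⟨t, htZ, ht⟩ := hNZ d hdN a
            exact ⟨t, fun y => hZcomm t htZ y,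
              choose_pow_eq_one hp hp2 (hZp t htZ), ht⟩
        have hdp : d ^ p = 1 := hNp d hdN
        have hcp := class2_pow a d ζ hζc hζconj p
        rw [hdp, hζch, mul_one, mul_one] at hcp
        have hconjp : x⁻¹ * gg ^ p ^ (m+1) * x = gg ^ p ^ (m+1) := by
          rw [← haq]
          calc x⁻¹ * a ^ p * x = (x⁻¹ * a * x) ^ p := (conj_pow_eq x a p).symm
            _ = (a * d) ^ p := by rw [hconj]
            _ = a ^ p := hcp
        calc gg ^ p ^ (m+1) * x
            = x * (x⁻¹ * gg ^ p ^ (m+1) * x) := by group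
          _ = x * gg ^ p ^ (m+1) := by rw [hconjp]
      -- the subgroup G^{p^(m+1)} is central
      have hNc : ∀ nn ∈ subgroupPow G (p ^ (m+1)), ∀ y : G, Commute nn y := by
        intro nn hnn
        have hnn' : nn ∈ Subgroup.closure {x : G | ∃ g : G, g ^ p ^ (m+1) = x} := hnn
        clear hnn
        induction hnn' using Subgroup.closure_induction with
        | mem u hu =>
            obtain ⟨gg, rfl⟩ := hu
            intro y; exact hB gg y
        | one => intro y; exact Commute.one_left _
        | mul u v hu hv ihu ihv => intro y; exact (ihu y).mul_left (ihv y)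
        | inv u hu ihu => intro y; exact (ihu y).inv_left
      -- p^m-th powers commute with p-th powers
      have hK9 : ∀ gg y : G, Commute (gg ^ p ^ m) (y ^ p) := by
        intro gg y
        have hdN := hD gg y
        have hconj : y⁻¹ * gg ^ p ^ m * y =
            gg ^ p ^ m * ((gg ^ p ^ m)⁻¹ * (y⁻¹ * gg ^ p ^ m * y)) :=
          (mul_inv_cancel_left _ _).symm
        have hiter := conj_iter (gg ^ p ^ m) y _ (fun u => (hNc _ hdN u).eq) hconj p
        rw [hNp _ hdN, mul_one] at hiter
        show gg ^ p ^ m * y ^ p = y ^ p * gg ^ p ^ m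
        calc gg ^ p ^ m * y ^ p
            = y ^ p * ((y ^ p)⁻¹ * gg ^ p ^ m * y ^ p) := by group
          _ = y ^ p * gg ^ p ^ m := by rw [hiter]
      -- part (a)
      have hA : ∀ x y : G, (x * y) ^ p ^ (m+1) = x ^ p ^ (m+1) * y ^ p ^ (m+1) := by
        intro x y
        have hq_eq : ∀ u : G, (u ^ p ^ m) ^ p = u ^ p ^ (m+1) :=
          fun u => by rw [← pow_mul, ← pow_succ]
        have hn2N : (x ^ p ^ m * y ^ p ^ m)⁻¹ * (x * y) ^ p ^ m ∈
            subgroupPow G (p ^ (m+1)) := by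
          rw [← QuotientGroup.eq_one_iff]
          show π2 ((x ^ p ^ m * y ^ p ^ m)⁻¹ * (x * y) ^ p ^ m) = 1
          simp only [map_mul, map_inv, map_pow]
          rw [← A2 (π2 x) (π2 y), inv_mul_cancel]
        set n2 : G := (x ^ p ^ m * y ^ p ^ m)⁻¹ * (x * y) ^ p ^ m with hn2d
        have hxyr : (x * y) ^ p ^ m = (x ^ p ^ m * y ^ p ^ m) * n2 :=
          (mul_inv_cancel_left _ _).symm
        have habp : (x ^ p ^ m * y ^ p ^ m) ^ p = x ^ p ^ (m+1) * y ^ p ^ (m+1) := by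
          obtain ⟨u, huc, huch, huconj⟩ :
              ∃ u : G, (∀ v : G, u * v = v * u) ∧ u ^ (p.choose 2) = 1 ∧
                (x ^ p ^ m)⁻¹ * (y ^ p ^ m) * (x ^ p ^ m) = y ^ p ^ m * u := by
            by_cases hp2 : p = 2
            · have hm1 : 1 ≤ m := by
                rcases Nat.eq_zero_or_pos m with h | h
                · exact absurd ⟨hp2, h⟩ hpm
                · omega
              refine ⟨1, by simp, one_pow _, ?_⟩
              have hby : (y ^ p ^ (m-1)) ^ p = y ^ p ^ m := by
                rw [← pow_mul, ← pow_succ, Nat.sub_add_cancel hm1]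
              have hcom : Commute (x ^ p ^ m) ((y ^ p ^ (m-1)) ^ p) := hK9 x _
              rw [hby] at hcom
              rw [mul_one, mul_assoc, ← hcom.eq, inv_mul_cancel_left]
            · have hdN' := hD y (x ^ p ^ m)
              refine ⟨(y ^ p ^ m)⁻¹ * ((x ^ p ^ m)⁻¹ * y ^ p ^ m * x ^ p ^ m),
                fun v => (hNc _ hdN' v).eq,
                choose_pow_eq_one hp hp2 (hNp _ hdN'), ?_⟩
              exact (mul_inv_cancel_left _ _).symm
          have h2 := class2_pow (x ^ p ^ m) (y ^ p ^ m) u huc huconj p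
          rw [huch, mul_one, hq_eq, hq_eq] at h2
          exact h2
        calc (x * y) ^ p ^ (m+1)
            = ((x * y) ^ p ^ m) ^ p := (hq_eq _).symm
          _ = ((x ^ p ^ m * y ^ p ^ m) * n2) ^ p := by rw [hxyr]
          _ = (x ^ p ^ m * y ^ p ^ m) ^ p * n2 ^ p :=
              ((hNc n2 hn2N _).symm.mul_pow p)
          _ = (x ^ p ^ m * y ^ p ^ m) ^ p := by rw [hNp n2 hn2N, mul_one]
          _ = x ^ p ^ (m+1) * y ^ p ^ (m+1) := habp
      exact ⟨hA, hB⟩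

/-- The map `x ↦ x^{p^{e-1}}` is a homomorphism of `G` onto `G^{p^{e-1}}`, and hence the
number of elements of order at most `p^{e-1}` equals the index `|G : G^{p^{e-1}}|`. -/
theorem stmt14 (p : ℕ) (hp : p.Prime) (G : Type*) [Group G] [Finite G]
    (hpG : IsPGroup p G) (hpow : IsPowerful p G) (e : ℕ)
    (hexp : Monoid.exponent G = p ^ e) :
    (∀ x y : G, (x * y) ^ p ^ (e - 1) = x ^ p ^ (e - 1) * y ^ p ^ (e - 1)) ∧
    (∀ g : G, g ^ p ^ (e - 1) ∈ subgroupPow G (p ^ (e - 1))) ∧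
    (∀ g ∈ subgroupPow G (p ^ (e - 1)), ∃ x : G, x ^ p ^ (e - 1) = g) ∧
    Nat.card {x : G // x ^ p ^ (e - 1) = 1} = (subgroupPow G (p ^ (e - 1))).index := by
  obtain ⟨hA, hB⟩ := stmt14_aux p hp e (Nat.card G) G le_rfl hpow (hexp ▸ dvd_rfl)
  have hmem : ∀ g : G, g ^ p ^ (e-1) ∈ subgroupPow G (p ^ (e-1)) :=
    fun g => Stmt14Aux.mem_spow _ g
  have hsurj : ∀ g ∈ subgroupPow G (p ^ (e-1)), ∃ x : G, x ^ p ^ (e-1) = g := by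
    intro g hg
    have hg' : g ∈ Subgroup.closure {x : G | ∃ g : G, g ^ p ^ (e-1) = x} := hg
    clear hg
    induction hg' using Subgroup.closure_induction with
    | mem u hu => exact hu
    | one => exact ⟨1, one_pow _⟩
    | mul u v hu hv ihu ihv =>
        obtain ⟨a, rfl⟩ := ihu
        obtain ⟨b, rfl⟩ := ihv
        exact ⟨a * b, hA a b⟩
    | inv u hu ihu =>
        obtain ⟨a, rfl⟩ := ihu
        exact ⟨a⁻¹, by rw [inv_pow]⟩
  refine ⟨hA, hmem, hsurj, ?_⟩
  set φ : G →* G := MonoidHom.mk' (fun x => x ^ p ^ (e-1)) hA with hφ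
  have hrange : φ.range = subgroupPow G (p ^ (e-1)) := by
    apply le_antisymm
    · rintro _ ⟨x, rfl⟩
      exact hmem x
    · intro g hg
      obtain ⟨x, hx⟩ := hsurj g hg
      exact ⟨x, hx⟩
  have e1 : Nat.card {x : G // x ^ p ^ (e-1) = 1} = Nat.card φ.ker := by
    apply Nat.card_congr
    exact Equiv.subtypeEquivRight (fun x => by
      simp only [MonoidHom.mem_ker, hφ, MonoidHom.mk'_apply])
  have e2 : φ.ker.index = Nat.card φ.range :=
    Nat.card_congr (QuotientGroup.quotientKerEquivRange φ).toEquiv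
  have e3 : Nat.card φ.ker * φ.ker.index = Nat.card G := Subgroup.card_mul_index _
  have e4 : Nat.card φ.range * φ.range.index = Nat.card G := Subgroup.card_mul_index _
  have hpos : 0 < Nat.card φ.range := Nat.card_pos
  have hfin : Nat.card φ.ker = φ.range.index := by
    rw [e2] at e3
    apply Nat.eq_of_mul_eq_mul_left hpos
    rw [mul_comm (Nat.card φ.range) (Nat.card φ.ker), e3, e4]
  rw [e1, hfin, hrange]
end

section
/- Let G be a powerful finite p-group. Then for every i ≥ 0, the index |G : G^{p^i}| equals the number of elements of G of order at most p^i, i.e., |G : G^{p^i}| = |{x ∈ G : x^{p^i} = 1}|. -/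
open scoped commutatorElement

namespace PowerfulAux
open Subgroup

variable {G : Type*} [Group G]

lemma pow_mem_sp (g : G) (n : ℕ) : g ^ n ∈ subgroupPow G n :=
  Subgroup.subset_closure ⟨g, rfl⟩

instance sp_normal (n : ℕ) : (subgroupPow G n).Normal := by
  constructor
  intro u hu g
  induction hu using Subgroup.closure_induction with
  | mem s hs =>
      obtain ⟨h, rfl⟩ := hs
      have : g * h ^ n * g⁻¹ = (g * h * g⁻¹) ^ n := by
        rw [conj_pow]
      rw [this]
      exact pow_mem_sp _ _
  | one => simpa using (subgroupPow G n).one_mem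
  | mul a b _ _ ha hb =>
      have : g * (a * b) * g⁻¹ = (g * a * g⁻¹) * (g * b * g⁻¹) := by group
      rw [this]; exact mul_mem ha hb
  | inv a _ ha =>
      have : g * a⁻¹ * g⁻¹ = (g * a * g⁻¹)⁻¹ := by group
      rw [this]; exact inv_mem ha

lemma sp_le_sp_of_dvd {m n : ℕ} (h : m ∣ n) : subgroupPow G n ≤ subgroupPow G m := by
  obtain ⟨k, rfl⟩ := h
  rw [subgroupPow]
  refine Subgroup.closure_le _ |>.mpr ?_
  rintro _ ⟨g, rfl⟩
  have : g ^ (m * k) = (g ^ k) ^ m := by rw [← pow_mul, mul_comm]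
  rw [this]
  exact pow_mem_sp _ _

lemma sp_le_sp_pow {p : ℕ} {a b : ℕ} (h : a ≤ b) :
    subgroupPow G (p ^ b) ≤ subgroupPow G (p ^ a) :=
  sp_le_sp_of_dvd (pow_dvd_pow p h)

lemma sp_eq_bot {n : ℕ} (h : ∀ g : G, g ^ n = 1) : subgroupPow G n = ⊥ := by
  rw [subgroupPow, eq_bot_iff]
  refine Subgroup.closure_le _ |>.mpr ?_
  rintro _ ⟨g, rfl⟩
  simp [h g]

lemma pow_eq_one_of_sp_bot {n : ℕ} (h : subgroupPow G n = ⊥) (g : G) : g ^ n = 1 := by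
  have := pow_mem_sp g n
  rw [h, Subgroup.mem_bot] at this
  exact this

lemma sp_map {H : Type*} [Group H] (f : G →* H) (hf : Function.Surjective f) (n : ℕ) :
    (subgroupPow G n).map f = subgroupPow H n := by
  rw [subgroupPow, subgroupPow, MonoidHom.map_closure]
  congr 1
  ext x
  constructor
  · rintro ⟨_, ⟨g, rfl⟩, rfl⟩
    exact ⟨f g, (map_pow f g n).symm⟩
  · rintro ⟨h, rfl⟩
    obtain ⟨g, rfl⟩ := hf h
    exact ⟨g ^ n, ⟨g, rfl⟩, map_pow f g n⟩

/-! commutator identities -/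

lemma comm_mul_left (a b x : G) : ⁅a * b, x⁆ = a * ⁅b, x⁆ * a⁻¹ * ⁅a, x⁆ := by
  simp only [commutatorElement_def]; group

lemma comm_inv_left (a x : G) : ⁅a⁻¹, x⁆ = a⁻¹ * ⁅a, x⁆⁻¹ * a := by
  simp only [commutatorElement_def]; group

lemma comm_one_left (x : G) : ⁅(1 : G), x⁆ = 1 := by
  simp only [commutatorElement_def]; group

lemma comm_inv_eq (a b : G) : ⁅a, b⁆⁻¹ = ⁅b, a⁆ := by
  simp only [commutatorElement_def]; group

/-- commutators with closure : generator condition suffices -/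
lemma comm_closure_mem {S : Set G} {K : Subgroup G} [K.Normal]
    (hS : ∀ s ∈ S, ∀ x : G, ⁅s, x⁆ ∈ K) :
    ∀ u ∈ Subgroup.closure S, ∀ x : G, ⁅u, x⁆ ∈ K := by
  intro u hu
  induction hu using Subgroup.closure_induction with
  | mem s hs => exact hS s hs
  | one => intro x; rw [comm_one_left]; exact K.one_mem
  | mul a b _ _ ha hb =>
      intro x
      rw [comm_mul_left]
      exact mul_mem (by
        have := hb x
        simpa [mul_assoc] using (‹K.Normal›.conj_mem _ this a)) (ha x)
  | inv a _ ha =>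
      intro x
      rw [comm_inv_left]
      have := (ha x)
      have h2 : a⁻¹ * ⁅a, x⁆⁻¹ * a ∈ K := by
        simpa [mul_assoc] using (‹K.Normal›.conj_mem _ (inv_mem this) a⁻¹)
      exact h2

/-- collected commutator power formula (generalized form). -/
lemma comm_pow_collect' (u x d z : G) (hd : ⁅u, x⁆ = d) (hzd : ⁅u, d⁆ = z)
    (hz : ∀ w : G, z * w = w * z) :
    ∀ m : ℕ, ⁅u ^ m, x⁆ = z ^ m.choose 2 * d ^ m := by
  have hzc : ∀ w : G, Commute z w := fun w => hz w
  have hud : u * d * u⁻¹ = z * d := by rw [← hzd, ← hd, commutatorElement_def]; group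
  have hudm : ∀ m : ℕ, u * d ^ m * u⁻¹ = z ^ m * d ^ m := by
    intro m
    induction m with
    | zero => simp
    | succ m ih =>
        have h0 : u * d ^ (m + 1) * u⁻¹ = (u * d ^ m * u⁻¹) * (u * d * u⁻¹) := by
          rw [pow_succ]; group
        rw [h0, ih, hud]
        have hcomm : d ^ m * z = z * d ^ m := ((hzc (d ^ m)).symm.eq)
        calc z ^ m * d ^ m * (z * d) = z ^ m * (d ^ m * z) * d := by group
          _ = z ^ m * (z * d ^ m) * d := by rw [hcomm]
          _ = z ^ (m + 1) * d ^ (m + 1) := by rw [pow_succ, pow_succ]; group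
  intro m
  induction m with
  | zero => simpa using (comm_one_left x)
  | succ m ih =>
      have h1 : ⁅u ^ (m + 1), x⁆ = u * ⁅u ^ m, x⁆ * u⁻¹ * ⁅u, x⁆ := by
        have h2 : u ^ (m + 1) = u * u ^ m := by rw [pow_succ']
        rw [h2, comm_mul_left]
      have hzck : u * z ^ m.choose 2 = z ^ m.choose 2 * u := ((hzc u).pow_left _).eq.symm
      have h2 : u * (z ^ m.choose 2 * d ^ m) * u⁻¹ = z ^ m.choose 2 * (u * d ^ m * u⁻¹) := by
        calc u * (z ^ m.choose 2 * d ^ m) * u⁻¹ = (u * z ^ m.choose 2) * d ^ m * u⁻¹ := by group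
          _ = (z ^ m.choose 2 * u) * d ^ m * u⁻¹ := by rw [hzck]
          _ = z ^ m.choose 2 * (u * d ^ m * u⁻¹) := by group
      have harith : (m + 1).choose 2 = m.choose 2 + m := by
        rw [Nat.choose_succ_succ, Nat.choose_one_right, Nat.add_comm]
      rw [h1, ih, h2, hudm m, hd, harith, pow_add, pow_succ]
      group

/-- class-2 binomial: if `y*x = c*(x*y)` with `c` commuting with `x` and `y`, then
    `(x*y)^m = x^m * y^m * c^(C(m,2))`. -/
lemma cl2_pow (x y c : G) (hyx : y * x = c * (x * y)) (hcx : Commute c x) (hcy : Commute c y) :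
    ∀ m : ℕ, (x * y) ^ m = x ^ m * y ^ m * c ^ m.choose 2 := by
  have hymx : ∀ m : ℕ, y ^ m * x = c ^ m * (x * y ^ m) := by
    intro m
    induction m with
    | zero => simp
    | succ m ih =>
        calc y ^ (m + 1) * x = y ^ m * (y * x) := by rw [pow_succ]; group
          _ = y ^ m * (c * (x * y)) := by rw [hyx]
          _ = (y ^ m * c) * x * y := by group
          _ = (c * y ^ m) * x * y := by rw [(hcy.pow_right m).symm.eq]
          _ = c * (y ^ m * x) * y := by group
          _ = c * (c ^ m * (x * y ^ m)) * y := by rw [ih]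
          _ = c ^ (m + 1) * (x * y ^ (m + 1)) := by rw [pow_succ, pow_succ]; group
  intro m
  induction m with
  | zero => simp
  | succ m ih =>
      have harith : (m + 1).choose 2 = m.choose 2 + m := by
        rw [Nat.choose_succ_succ, Nat.choose_one_right, Nat.add_comm]
      have hcxy : ∀ k : ℕ, c ^ k * (x * y) = (x * y) * c ^ k := by
        intro k
        have h1 : Commute (c ^ k) (x * y) := ((hcx.mul_right hcy).pow_left k)
        exact h1.eq
      calc (x * y) ^ (m + 1) = (x * y) ^ m * (x * y) := by rw [pow_succ]
        _ = x ^ m * y ^ m * c ^ m.choose 2 * (x * y) := by rw [ih]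
        _ = x ^ m * y ^ m * (c ^ m.choose 2 * (x * y)) := by group
        _ = x ^ m * y ^ m * ((x * y) * c ^ m.choose 2) := by rw [hcxy]
        _ = x ^ m * (y ^ m * x) * y * c ^ m.choose 2 := by group
        _ = x ^ m * (c ^ m * (x * y ^ m)) * y * c ^ m.choose 2 := by rw [hymx]
        _ = (x ^ m * c ^ m) * x * (y ^ m * y) * c ^ m.choose 2 := by group
        _ = (c ^ m * x ^ m) * x * (y ^ m * y) * c ^ m.choose 2 := by
              rw [((hcx.pow_left m).pow_right m).eq]
        _ = c ^ m * (x ^ (m+1) * y ^ (m+1) * c ^ m.choose 2) := by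
              rw [pow_succ x, pow_succ y]; group
        _ = (x ^ (m+1) * y ^ (m+1) * c ^ m.choose 2) * c ^ m := by
              have h2 : Commute (c ^ m) (x ^ (m+1) * y ^ (m+1) * c ^ m.choose 2) :=
                (((hcx.pow_right (m+1)).mul_right (hcy.pow_right (m+1))).mul_right
                  ((Commute.refl c).pow_right (m.choose 2))).pow_left m
              exact h2.eq
        _ = x ^ (m+1) * y ^ (m+1) * c ^ ((m+1).choose 2) := by
              rw [harith, pow_add]; group

end PowerfulAux
section DerivedTest
namespace PowerfulAux
open Subgroup

/-- shift: 1 for odd primes, 2 for `p = 2`. -/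
def sft (p : ℕ) : ℕ := if p = 2 then 2 else 1

lemma one_le_sft (p : ℕ) : 1 ≤ sft p := by unfold sft; split <;> norm_num

lemma sft_two : sft 2 = 2 := by simp [sft]

lemma sft_odd {p : ℕ} (h : p ≠ 2) : sft p = 1 := by simp [sft, h]

variable {G : Type*} [Group G] {p : ℕ}

/-- The generator-form graded commutator condition. -/
def Cstmt (p : ℕ) (G : Type*) [Group G] : Prop :=
  ∀ (b : ℕ) (g x : G), ⁅g ^ p ^ b, x⁆ ∈ subgroupPow G (p ^ (b + sft p))

lemma isPowerful_comm (hpow : IsPowerful p G) (g x : G) :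
    ⁅g, x⁆ ∈ subgroupPow G (p ^ sft p) := by
  have hmem : ⁅g, x⁆ ∈ commutator G := by
    rw [_root_.commutator_def]
    exact Subgroup.commutator_mem_commutator (Subgroup.mem_top g) (Subgroup.mem_top x)
  by_cases h2 : p = 2
  · subst h2
    rw [sft_two]
    rw [IsPowerful, if_pos rfl] at hpow
    have : (2 : ℕ) ^ 2 = 4 := by norm_num
    rw [this]
    exact hpow hmem
  · rw [sft_odd h2]
    rw [IsPowerful, if_neg h2] at hpow
    rw [pow_one]
    exact hpow hmem

/-- pointwise upgrade: commutator condition for all subgroup elements -/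
lemma Cpt (hC : Cstmt p G) (b : ℕ) :
    ∀ u ∈ subgroupPow G (p ^ b), ∀ x : G, ⁅u, x⁆ ∈ subgroupPow G (p ^ (b + sft p)) := by
  have := comm_closure_mem (G := G) (S := {x : G | ∃ g : G, g ^ p ^ b = x})
    (K := subgroupPow G (p ^ (b + sft p))) ?_
  · exact this
  · rintro _ ⟨g, rfl⟩ x
    exact hC b g x

/-- elements of `G^{p^b}` are central in `G ⧸ G^{p^c}` whenever `b + sft p ≥ c`. -/
lemma central_mod (hC : Cstmt p G) {b c : ℕ} (hbc : c ≤ b + sft p) (u : G)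
    (hu : u ∈ subgroupPow G (p ^ b)) (x : G) :
    ⁅u, x⁆ ∈ subgroupPow G (p ^ c) :=
  sp_le_sp_pow hbc (Cpt hC b u hu x)

/-- if `G^{p^{b+sft}} = ⊥` then all of `G^{p^b}` is central. -/
lemma central_of_bot (hC : Cstmt p G) {b c : ℕ} (hbc : c ≤ b + sft p)
    (hbot : subgroupPow G (p ^ c) = ⊥) (u : G) (hu : u ∈ subgroupPow G (p ^ b)) (x : G) :
    u * x = x * u := by
  have h1 : ⁅u, x⁆ ∈ (⊥ : Subgroup G) := hbot ▸ central_mod hC hbc u hu x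
  rw [Subgroup.mem_bot] at h1
  have := commutatorElement_eq_one_iff_commute.mp h1
  exact this.eq

/-- `E`: p-th powers descend one level. -/
lemma E_lemma (hC : Cstmt p G) (a : ℕ) :
    ∀ y ∈ subgroupPow G (p ^ a), y ^ p ∈ subgroupPow G (p ^ (a + 1)) := by
  set K := subgroupPow G (p ^ (a + 1)) with hK
  haveI : K.Normal := sp_normal _
  let W : Subgroup (G ⧸ K) :=
    { carrier := {q | q ∈ Subgroup.center (G ⧸ K) ∧ q ^ p = 1}
      one_mem' := ⟨Subgroup.one_mem _, one_pow p⟩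
      mul_mem' := by
        rintro q r ⟨hq1, hq2⟩ ⟨hr1, hr2⟩
        refine ⟨mul_mem hq1 hr1, ?_⟩
        have hcomm : Commute q r := ((Subgroup.mem_center_iff.mp hq1 r)).symm
        rw [hcomm.mul_pow, hq2, hr2, one_mul]
      inv_mem' := by
        rintro q ⟨hq1, hq2⟩
        exact ⟨inv_mem hq1, by rw [inv_pow, hq2, inv_one]⟩ }
  have himg : ∀ g : G, ((g ^ p ^ a : G) : G ⧸ K) ∈ W := by
    intro g
    constructor
    · rw [Subgroup.mem_center_iff]
      intro q
      induction q using QuotientGroup.induction_on with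
      | _ w =>
        have h1 : ⁅(g ^ p ^ a : G), w⁆ ∈ K := by
          rw [hK]
          exact sp_le_sp_pow (Nat.add_le_add_left (one_le_sft p) a)
            (by simpa using hC a g w)
        have h2 : ⁅((g ^ p ^ a : G) : G ⧸ K), (w : G ⧸ K)⁆ = 1 := by
          calc ⁅((g ^ p ^ a : G) : G ⧸ K), (w : G ⧸ K)⁆
              = ((⁅g ^ p ^ a, w⁆ : G) : G ⧸ K) :=
                (map_commutatorElement (QuotientGroup.mk' K) _ _).symm
            _ = 1 := (QuotientGroup.eq_one_iff _).mpr h1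
        exact (commutatorElement_eq_one_iff_commute.mp h2).eq.symm
    · have h3 : ((g ^ p ^ a : G) : G ⧸ K) ^ p = ((g ^ p ^ (a + 1) : G) : G ⧸ K) := by
        rw [← QuotientGroup.mk_pow, ← pow_mul, ← pow_succ]
      rw [h3]
      exact (QuotientGroup.eq_one_iff _).mpr (pow_mem_sp g _)
  intro y hy
  have hmap : ((y : G) : G ⧸ K) ∈ W := by
    have h4 : ((y : G) : G ⧸ K) ∈ Subgroup.map (QuotientGroup.mk' K) (subgroupPow G (p ^ a)) :=
      ⟨y, hy, rfl⟩
    rw [subgroupPow, MonoidHom.map_closure] at h4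
    refine Subgroup.closure_le _ |>.mpr ?_ h4
    rintro _ ⟨_, ⟨g, rfl⟩, rfl⟩
    exact himg g
  have h5 : ((y ^ p : G) : G ⧸ K) = 1 := by
    rw [QuotientGroup.mk_pow]
    exact hmap.2
  exact (QuotientGroup.eq_one_iff _).mp h5

lemma Eiter (hC : Cstmt p G) (a : ℕ) :
    ∀ (b : ℕ), ∀ y ∈ subgroupPow G (p ^ a), y ^ p ^ b ∈ subgroupPow G (p ^ (a + b)) := by
  intro b
  induction b with
  | zero => intro y hy; simpa using hy
  | succ b ih =>
      intro y hy
      have h1 : y ^ p ^ (b + 1) = (y ^ p ^ b) ^ p := by rw [← pow_mul, ← pow_succ]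
      rw [h1, ← Nat.add_assoc]
      exact E_lemma hC (a + b) _ (ih y hy)

end PowerfulAux
end DerivedTest
namespace PowerfulAux
open Subgroup

variable {G : Type*} [Group G] {p : ℕ}

lemma pow_pow_add (x : G) (a b : ℕ) : (x ^ p ^ a) ^ p ^ b = x ^ p ^ (a + b) := by
  rw [← pow_mul, ← pow_add]

/-- base congruence: `(xy)^p ≡ x^p y^p mod G^{p^{j+2}}` for `y ∈ G^{p^j}`
    (for `p = 2` require `j ≥ 1`). -/
lemma QL1 (hp : p.Prime) (hC : Cstmt p G) (j : ℕ) (hj : p = 2 → 1 ≤ j) (x y : G)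
    (hy : y ∈ subgroupPow G (p ^ j)) :
    (x ^ p * y ^ p)⁻¹ * (x * y) ^ p ∈ subgroupPow G (p ^ (j + 2)) := by
  by_cases h2 : p = 2
  · subst h2
    have hid : (x ^ 2 * y ^ 2)⁻¹ * (x * y) ^ 2 = y⁻¹ * ⁅y⁻¹, x⁻¹⁆ * y := by
      simp only [commutatorElement_def, pow_two]; group
    rw [hid]
    have h3 : ⁅y⁻¹, x⁻¹⁆ ∈ subgroupPow G (2 ^ (j + 2)) := by
      have := Cpt hC j y⁻¹ (inv_mem hy) x⁻¹
      rwa [sft_two] at this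
    have h4 := (sp_normal (G := G) (2 ^ (j + 2))).conj_mem _ h3 y⁻¹
    simpa [mul_assoc] using h4
  · have hsft : sft p = 1 := sft_odd h2
    set K := subgroupPow G (p ^ (j + 2)) with hK
    haveI : K.Normal := sp_normal _
    set c := ⁅y, x⁆ with hc
    have hcmem : c ∈ subgroupPow G (p ^ (j + 1)) := by
      have := Cpt hC j y hy x
      rwa [hsft] at this
    -- in the quotient
    have hcent : ∀ w : G, Commute ((c : G) : G ⧸ K) ((w : G) : G ⧸ K) := by
      intro w
      have h5 : ⁅c, w⁆ ∈ K := by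
        have := Cpt hC (j + 1) c hcmem w
        rw [hsft] at this
        exact this
      apply commutatorElement_eq_one_iff_commute.mp
      calc ⁅((c : G) : G ⧸ K), ((w : G) : G ⧸ K)⁆
          = ((⁅c, w⁆ : G) : G ⧸ K) := (map_commutatorElement (QuotientGroup.mk' K) _ _).symm
        _ = 1 := (QuotientGroup.eq_one_iff _).mpr h5
    have hcp : ((c : G) : G ⧸ K) ^ p = 1 := by
      rw [← QuotientGroup.mk_pow]
      exact (QuotientGroup.eq_one_iff _).mpr (E_lemma hC (j + 1) c hcmem)
    have hyx : ((y : G) : G ⧸ K) * x = ((c : G) : G ⧸ K) * ((x : G) * y) := by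
      have : (y : G) * x = c * (x * y) := by rw [hc, commutatorElement_def]; group
      calc ((y : G) : G ⧸ K) * x = ((y * x : G) : G ⧸ K) := rfl
        _ = ((c * (x * y) : G) : G ⧸ K) := by rw [this]
        _ = ((c : G) : G ⧸ K) * ((x : G) * y) := by
              rw [QuotientGroup.mk_mul, QuotientGroup.mk_mul]
    have hbin := cl2_pow ((x : G) : G ⧸ K) ((y : G) : G ⧸ K) ((c : G) : G ⧸ K)
      hyx (hcent x) (hcent y) p
    have hchoose : ((c : G) : G ⧸ K) ^ p.choose 2 = 1 := by
      obtain ⟨t, ht⟩ := hp.dvd_choose_self (by norm_num) (lt_of_le_of_ne hp.two_le (Ne.symm h2))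
      rw [ht, pow_mul, hcp, one_pow]
    have hfin : (((x * y) ^ p : G) : G ⧸ K) = ((x ^ p * y ^ p : G) : G ⧸ K) := by
      calc (((x * y) ^ p : G) : G ⧸ K)
          = (((x : G) : G ⧸ K) * ((y : G) : G ⧸ K)) ^ p := by
            rw [← QuotientGroup.mk_mul, ← QuotientGroup.mk_pow]
        _ = ((x : G) : G ⧸ K) ^ p * ((y : G) : G ⧸ K) ^ p * ((c : G) : G ⧸ K) ^ p.choose 2 :=
            hbin
        _ = ((x ^ p * y ^ p : G) : G ⧸ K) := by
            rw [hchoose, mul_one, ← QuotientGroup.mk_pow, ← QuotientGroup.mk_pow,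
              ← QuotientGroup.mk_mul]
    exact QuotientGroup.eq.mp hfin.symm

/-- main congruence: `(xy)^{p^i} ≡ x^{p^i} y^{p^i} mod G^{p^{i+j+1}}` for `y ∈ G^{p^j}`. -/
lemma QL (hp : p.Prime) (hC : Cstmt p G) :
    ∀ i : ℕ, 1 ≤ i → ∀ j : ℕ, (p = 2 → 1 ≤ j) → ∀ x y : G, y ∈ subgroupPow G (p ^ j) →
      (x ^ p ^ i * y ^ p ^ i)⁻¹ * (x * y) ^ p ^ i ∈ subgroupPow G (p ^ (i + j + 1)) := by
  intro i hi
  induction i, hi using Nat.le_induction with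
  | base =>
      intro j hj x y hy
      have := QL1 hp hC j hj x y hy
      have harith : j + 2 = 1 + j + 1 := by omega
      rw [harith] at this
      simpa [pow_one] using this
  | succ i hi ih =>
      intro j hj x y hy
      set K := subgroupPow G (p ^ (i + 1 + j + 1)) with hK
      haveI : K.Normal := sp_normal _
      have hk0 : (x ^ p * y ^ p)⁻¹ * (x * y) ^ p ∈ subgroupPow G (p ^ (j + 2)) :=
        QL1 hp hC j hj x y hy
      set k₀ := (x ^ p * y ^ p)⁻¹ * (x * y) ^ p with hk₀def
      have hxyp : (x * y) ^ p = x ^ p * (y ^ p * k₀) := by rw [hk₀def]; group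
      have hw : y ^ p * k₀ ∈ subgroupPow G (p ^ (j + 1)) := by
        refine mul_mem ?_ (sp_le_sp_pow (by omega) hk0)
        exact E_lemma hC j y hy
      have h1 := ih (j + 1) (fun _ => by omega) (x ^ p) (y ^ p * k₀) hw
      have h2 := ih (j + 2) (fun _ => by omega) (y ^ p) k₀ hk0
      have h3 : k₀ ^ p ^ i ∈ K := by
        have := Eiter hC (j + 2) i k₀ hk0
        rw [hK]
        have harith : j + 2 + i = i + 1 + j + 1 := by omega
        rwa [harith] at this
      have h1' : ((x ^ p) ^ p ^ i * (y ^ p * k₀) ^ p ^ i)⁻¹ * (x ^ p * (y ^ p * k₀)) ^ p ^ i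
          ∈ K := by
        rw [hK]
        have harith : i + (j + 1) + 1 = i + 1 + j + 1 := by omega
        rwa [harith] at h1
      have h2' : ((y ^ p) ^ p ^ i * k₀ ^ p ^ i)⁻¹ * (y ^ p * k₀) ^ p ^ i ∈ K := by
        refine sp_le_sp_pow (by omega) h2
      -- quotient chase
      have hA : (((x ^ p) ^ p ^ i * (y ^ p * k₀) ^ p ^ i : G) : G ⧸ K)
          = (((x ^ p * (y ^ p * k₀)) ^ p ^ i : G) : G ⧸ K) := QuotientGroup.eq.mpr h1'
      have hB : (((y ^ p) ^ p ^ i * k₀ ^ p ^ i : G) : G ⧸ K)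
          = (((y ^ p * k₀) ^ p ^ i : G) : G ⧸ K) := QuotientGroup.eq.mpr h2'
      have hk0q : ((k₀ ^ p ^ i : G) : G ⧸ K) = 1 := (QuotientGroup.eq_one_iff _).mpr h3
      have hgoal : ((x ^ p ^ (i + 1) * y ^ p ^ (i + 1) : G) : G ⧸ K)
          = (((x * y) ^ p ^ (i + 1) : G) : G ⧸ K) := by
        have e1 : (x * y) ^ p ^ (i + 1) = (x ^ p * (y ^ p * k₀)) ^ p ^ i := by
          rw [← hxyp, ← pow_mul, ← pow_succ']
        have e2 : x ^ p ^ (i + 1) = (x ^ p) ^ p ^ i := by rw [← pow_mul, ← pow_succ']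
        have e3 : y ^ p ^ (i + 1) = (y ^ p) ^ p ^ i := by rw [← pow_mul, ← pow_succ']
        calc ((x ^ p ^ (i + 1) * y ^ p ^ (i + 1) : G) : G ⧸ K)
            = ((x ^ p ^ (i + 1) : G) : G ⧸ K) * ((y ^ p ^ (i + 1) : G) : G ⧸ K) := by
              rw [QuotientGroup.mk_mul]
          _ = (((x ^ p) ^ p ^ i : G) : G ⧸ K) * (((y ^ p) ^ p ^ i : G) : G ⧸ K) := by
              rw [e2, e3]
          _ = (((x ^ p) ^ p ^ i : G) : G ⧸ K) *
              ((((y ^ p) ^ p ^ i : G) : G ⧸ K) * ((k₀ ^ p ^ i : G) : G ⧸ K)) := by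
              rw [hk0q, mul_one]
          _ = (((x ^ p) ^ p ^ i : G) : G ⧸ K) * (((y ^ p) ^ p ^ i * k₀ ^ p ^ i : G) : G ⧸ K) := by
              rw [QuotientGroup.mk_mul]
          _ = (((x ^ p) ^ p ^ i : G) : G ⧸ K) * (((y ^ p * k₀) ^ p ^ i : G) : G ⧸ K) := by
              rw [hB]
          _ = (((x ^ p) ^ p ^ i * (y ^ p * k₀) ^ p ^ i : G) : G ⧸ K) := by
              rw [QuotientGroup.mk_mul]
          _ = (((x ^ p * (y ^ p * k₀)) ^ p ^ i : G) : G ⧸ K) := hA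
          _ = (((x * y) ^ p ^ (i + 1) : G) : G ⧸ K) := by rw [e1]
      exact QuotientGroup.eq.mp hgoal

/-- for `p = 2`: the top power map is a homomorphism. -/
lemma TOP2 (hC : Cstmt 2 G) (hpow' : ∀ g x : G, ⁅g, x⁆ ∈ subgroupPow G (2 ^ sft 2))
    (e : ℕ) (he : ∀ x : G, x ^ 2 ^ e = 1) (x y : G) :
    (x * y) ^ 2 ^ (e - 1) = x ^ 2 ^ (e - 1) * y ^ 2 ^ (e - 1) := by
  have hbot : subgroupPow G (2 ^ e) = ⊥ := sp_eq_bot he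
  rcases Nat.lt_or_ge e 2 with he2 | he2
  · interval_cases e
    · simp
    · simp [pow_one]  -- e = 1 : exponent 2^0 = 1
  · -- e ≥ 2
    have hcmem : (x ^ 2 * y ^ 2)⁻¹ * (x * y) ^ 2 ∈ subgroupPow G (2 ^ 2) := by
      have hid : (x ^ 2 * y ^ 2)⁻¹ * (x * y) ^ 2 = y⁻¹ * ⁅y⁻¹, x⁻¹⁆ * y := by
        simp only [commutatorElement_def, pow_two]; group
      rw [hid]
      have h3 : ⁅y⁻¹, x⁻¹⁆ ∈ subgroupPow G (2 ^ 2) := by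
        have := hpow' y⁻¹ x⁻¹
        rwa [sft_two] at this
      have h4 := (sp_normal (G := G) (2 ^ 2)).conj_mem _ h3 y⁻¹
      simpa [mul_assoc] using h4
    set c := (x ^ 2 * y ^ 2)⁻¹ * (x * y) ^ 2 with hcdef
    have hxy2 : (x * y) ^ 2 = x ^ 2 * (y ^ 2 * c) := by rw [hcdef]; group
    rcases Nat.eq_or_lt_of_le he2 with he3 | he3
    · -- e = 2
      have : c = 1 := by
        have h6 := hcmem
        rw [← he3] at hbot
        rw [hbot, Subgroup.mem_bot] at h6
        exact h6
      have h5 : (x * y) ^ 2 = x ^ 2 * y ^ 2 := by rw [hxy2, this, mul_one]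
      have harr : e - 1 = 1 := by omega
      rw [harr, pow_one]
      exact h5
    · -- e ≥ 3
      have hi1 : 1 ≤ e - 2 := by omega
      have hw : y ^ 2 * c ∈ subgroupPow G (2 ^ 1) := by
        refine mul_mem ?_ (sp_le_sp_pow (by omega) hcmem)
        have : y ^ 2 = y ^ 2 ^ 1 := by norm_num
        rw [this]
        exact pow_mem_sp y _
      have h1 := QL Nat.prime_two hC (e - 2) hi1 1 (fun _ => le_refl 1) (x ^ 2) (y ^ 2 * c) hw
      have h2 := QL Nat.prime_two hC (e - 2) hi1 2 (fun _ => by omega) (y ^ 2) c hcmem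
      have hbot1 : subgroupPow G (2 ^ (e - 2 + 1 + 1)) = ⊥ := by
        have : e - 2 + 1 + 1 = e := by omega
        rw [this]; exact hbot
      have hbot2 : subgroupPow G (2 ^ (e - 2 + 2 + 1)) = ⊥ := by
        refine le_bot_iff.mp ?_
        rw [← hbot]
        exact sp_le_sp_pow (by omega)
      have hcpow : c ^ 2 ^ (e - 2) = 1 := by
        have := Eiter hC 2 (e - 2) c hcmem
        have harith : 2 + (e - 2) = e := by omega
        rw [harith, hbot, Subgroup.mem_bot] at this
        exact this
      rw [hbot1, Subgroup.mem_bot] at h1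
      rw [hbot2, Subgroup.mem_bot] at h2
      have h1e : (x ^ 2 * (y ^ 2 * c)) ^ 2 ^ (e - 2) = (x ^ 2) ^ 2 ^ (e - 2) * (y ^ 2 * c) ^ 2 ^ (e - 2) := by
        exact (inv_mul_eq_one.mp h1).symm
      have h2e : (y ^ 2 * c) ^ 2 ^ (e - 2) = (y ^ 2) ^ 2 ^ (e - 2) * c ^ 2 ^ (e - 2) := by
        exact (inv_mul_eq_one.mp h2).symm
      have ecoll : ∀ w : G, (w ^ 2) ^ 2 ^ (e - 2) = w ^ 2 ^ (e - 1) := by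
        intro w
        rw [← pow_mul]
        congr 1
        have : e - 1 = (e - 2) + 1 := by omega
        rw [this, pow_succ]
        ring
      have efin : (x * y) ^ 2 ^ (e - 1) = ((x * y) ^ 2) ^ 2 ^ (e - 2) := by
        rw [← pow_mul]
        congr 1
        have : e - 1 = 1 + (e - 2) := by omega
        rw [this, pow_add, pow_one]
      rw [efin, hxy2, h1e, h2e, hcpow, mul_one, ecoll, ecoll]

end PowerfulAux
namespace PowerfulAux
open Subgroup

variable {G : Type*} [Group G] {p : ℕ}

lemma isPowerful_quotient (hpow : IsPowerful p G) (N : Subgroup G) [N.Normal] :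
    IsPowerful p (G ⧸ N) := by
  have key : ∀ q : ℕ, commutator G ≤ subgroupPow G q →
      commutator (G ⧸ N) ≤ subgroupPow (G ⧸ N) q := by
    intro q hle
    have h1 : commutator (G ⧸ N) =
        Subgroup.map (QuotientGroup.mk' N) (commutator G) := by
      rw [_root_.commutator_def, _root_.commutator_def, Subgroup.map_commutator,
        Subgroup.map_top_of_surjective _ (QuotientGroup.mk'_surjective N)]
    rw [h1, ← sp_map (QuotientGroup.mk' N) (QuotientGroup.mk'_surjective N)]
    exact Subgroup.map_mono hle
  unfold IsPowerful at hpow ⊢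
  split at hpow <;> split <;> first
    | exact key _ hpow
    | omega
    | (rename_i h1 h2; exact absurd h1 h2)

lemma normal_of_le_center {N : Subgroup G} (h : N ≤ Subgroup.center G) : N.Normal := by
  constructor
  intro m hm g
  have := (Subgroup.mem_center_iff.mp (h hm) g).symm
  have h2 : g * m * g⁻¹ = m := by rw [← this]; group
  rw [h2]; exact hm

lemma exists_expBound [Finite G] (hpG : IsPGroup p G) : ∃ n : ℕ, ∀ x : G, x ^ p ^ n = 1 := by
  cases nonempty_fintype G
  classical
  refine ⟨Finset.univ.sup (fun x : G => (hpG x).choose), fun x => ?_⟩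
  have hx := (hpG x).choose_spec
  have hle : (hpG x).choose ≤ Finset.univ.sup (fun x : G => (hpG x).choose) :=
    Finset.le_sup (f := fun x : G => (hpG x).choose) (Finset.mem_univ x)
  calc x ^ p ^ Finset.univ.sup (fun x : G => (hpG x).choose)
      = (x ^ p ^ (hpG x).choose) ^ p ^ (Finset.univ.sup (fun x : G => (hpG x).choose)
          - (hpG x).choose) := by rw [pow_pow_add, Nat.add_sub_cancel' hle]
    _ = 1 := by rw [hx, one_pow]

lemma exists_central_orderp (hp : p.Prime) [Finite G] [Nontrivial G] (hpG : IsPGroup p G) :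
    ∃ n₀ : G, n₀ ∈ Subgroup.center G ∧ n₀ ≠ 1 ∧ n₀ ^ p = 1 := by
  haveI : Fact p.Prime := ⟨hp⟩
  haveI := hpG.center_nontrivial
  obtain ⟨z, hz⟩ := exists_ne (1 : Subgroup.center G)
  have hz1 : (z : G) ≠ 1 := by
    intro h
    exact hz (Subtype.ext h)
  classical
  obtain ⟨k, hk⟩ := hpG (z : G)
  have hex : ∃ m : ℕ, (z : G) ^ p ^ m = 1 := ⟨k, hk⟩
  set kf := Nat.find hex with hkf
  have hspec : (z : G) ^ p ^ kf = 1 := Nat.find_spec hex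
  have hkf1 : 1 ≤ kf := by
    by_contra h
    have : kf = 0 := by omega
    rw [this] at hspec
    simp at hspec
    exact hz hspec
  refine ⟨(z : G) ^ p ^ (kf - 1), ?_, ?_, ?_⟩
  · exact Subgroup.pow_mem _ z.2 _
  · exact Nat.find_min hex (by omega)
  · rw [← pow_mul, ← pow_succ]
    have : kf - 1 + 1 = kf := by omega
    rw [this]
    exact hspec

lemma card_quotient_lt [Finite G] {N : Subgroup G} [N.Normal] (hN : N ≠ ⊥) :
    Nat.card (G ⧸ N) < Nat.card G := by
  have h1 : Nat.card G = Nat.card (G ⧸ N) * Nat.card N :=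
    Subgroup.card_eq_card_quotient_mul_card_subgroup N
  have h2 : 1 < Nat.card N := (Subgroup.one_lt_card_iff_ne_bot N).mpr hN
  have h3 : 0 < Nat.card (G ⧸ N) := Nat.card_pos
  have h4 : Nat.card (G ⧸ N) < Nat.card (G ⧸ N) * Nat.card N := by nlinarith
  rw [h1]; exact h4

lemma zpow_pow_eq_one {n₀ : G} {m : ℕ} (h : n₀ ^ m = 1) (k : ℤ) : (n₀ ^ k) ^ m = 1 := by
  have h1 : (n₀ ^ k) ^ (m : ℤ) = (n₀ ^ (m : ℤ)) ^ k := by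
    rw [← zpow_mul, ← zpow_mul, mul_comm]
  calc (n₀ ^ k) ^ m = (n₀ ^ k) ^ (m : ℤ) := by rw [zpow_natCast]
    _ = (n₀ ^ (m : ℤ)) ^ k := h1
    _ = 1 := by rw [zpow_natCast, h, one_zpow]

/-- The KEY existence lemma. -/
lemma KEY (hp : p.Prime) (hC : Cstmt p G)
    (hpow' : ∀ g x : G, ⁅g, x⁆ ∈ subgroupPow G (p ^ sft p))
    (e i : ℕ) (he : ∀ x : G, x ^ p ^ e = 1) (g : G) (hg : g ^ p ^ (e - 1) ≠ 1)
    (hi1 : 1 ≤ i) (hie : i < e) :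
    ∃ y n : G, y ^ p ^ i = n ∧ n ≠ 1 ∧ n ∈ Subgroup.center G ∧ n ^ p = 1 ∧
      ∀ x : G, (x * y) ^ p ^ i = x ^ p ^ i * n := by
  have hbot : subgroupPow G (p ^ e) = ⊥ := sp_eq_bot he
  refine ⟨g ^ p ^ (e - 1 - i), g ^ p ^ (e - 1), ?_, hg, ?_, ?_, ?_⟩
  · rw [pow_pow_add]; congr 2; omega
  · rw [Subgroup.mem_center_iff]
    intro x
    have h1 : ⁅g ^ p ^ (e - 1), x⁆ ∈ subgroupPow G (p ^ e) :=
      sp_le_sp_pow (by have := one_le_sft p; omega) (hC (e - 1) g x)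
    rw [hbot, Subgroup.mem_bot] at h1
    exact (commutatorElement_eq_one_iff_commute.mp h1).eq.symm
  · rw [← pow_mul, ← pow_succ]
    have h2 : e - 1 + 1 = e := by omega
    rw [h2]; exact he g
  · intro x
    by_cases hcase : p = 2 ∧ i = e - 1
    · obtain ⟨h2, hieq⟩ := hcase
      subst h2
      have h3 : e - 1 - i = 0 := by omega
      rw [h3, pow_zero, pow_one]
      have h4 := TOP2 hC hpow' e he x g
      rw [hieq]
      rw [h4]
    · have hj : p = 2 → 1 ≤ e - 1 - i := by
        intro h2
        rcases Nat.eq_or_lt_of_le (by omega : i ≤ e - 1) with h | h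
        · exact absurd ⟨h2, h⟩ hcase
        · omega
      have hmem := QL hp hC i hi1 (e - 1 - i) hj x (g ^ p ^ (e - 1 - i))
        (pow_mem_sp g _)
      have harith : i + (e - 1 - i) + 1 = e := by omega
      rw [harith, hbot, Subgroup.mem_bot] at hmem
      have h5 := (inv_mul_eq_one.mp hmem).symm
      rw [h5, pow_pow_add]
      have h6 : e - 1 - i + i = e - 1 := by omega
      rw [h6]

/-- The counting step. -/
lemma MAIN_step (hp : p.Prime) [Finite G] (i : ℕ) (hi : 1 ≤ i)
    (y n : G) (N : Subgroup G) [N.Normal] (hNgen : N = Subgroup.zpowers n)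
    (hNle : N ≤ Subgroup.center G)
    (hyn : y ^ p ^ i = n) (hn1 : n ≠ 1) (hnp : n ^ p = 1)
    (hT : ∀ x : G, (x * y) ^ p ^ i = x ^ p ^ i * n)
    (hquot : (subgroupPow (G ⧸ N) (p ^ i)).index
        = Nat.card {z : G ⧸ N // z ^ p ^ i = 1}) :
    (subgroupPow G (p ^ i)).index = Nat.card {x : G // x ^ p ^ i = 1} := by
  classical
  haveI : Fact p.Prime := ⟨hp⟩
  have hnpi : n ^ p ^ i = 1 := by
    have h1 : p ^ i = p * p ^ (i - 1) := by
      rw [← pow_succ']; congr 1; omega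
    rw [h1, pow_mul, hnp, one_pow]
  -- the well-defined power map F : G ⧸ N → G
  have hwd : ∀ a b : G, (QuotientGroup.leftRel N) a b → a ^ p ^ i = b ^ p ^ i := by
    intro a b hab
    rw [QuotientGroup.leftRel_apply] at hab
    obtain ⟨k, hk⟩ : ∃ k : ℤ, n ^ k = a⁻¹ * b := by
      rw [← Subgroup.mem_zpowers_iff, ← hNgen]; exact hab
    have hb : b = a * n ^ k := by rw [hk]; group
    have hcomm : Commute a (n ^ k) := by
      have := Subgroup.mem_center_iff.mp (hNle (by rw [hNgen]; exact zpow_mem (Subgroup.mem_zpowers n) k)) a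
      exact this
    rw [hb, hcomm.mul_pow]
    have hnk : (n ^ k) ^ p ^ i = 1 := zpow_pow_eq_one hnpi k
    rw [hnk, mul_one]
  set F : G ⧸ N → G := fun z => Quotient.liftOn' z (fun x => x ^ p ^ i) hwd with hFdef
  have hF : ∀ x : G, F ((x : G) : G ⧸ N) = x ^ p ^ i := fun x => rfl
  have hstep : ∀ z : G ⧸ N, F (z * ((y : G) : G ⧸ N)) = F z * n := by
    intro z
    induction z using QuotientGroup.induction_on with
    | _ a =>
      have h3 : ((a : G) : G ⧸ N) * ((y : G) : G ⧸ N) = ((a * y : G) : G ⧸ N) := rfl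
      rw [h3, hF, hF, hT]
  have hstep' : ∀ z : G ⧸ N, F (z * ((y : G) : G ⧸ N)⁻¹) = F z * n⁻¹ := by
    intro z
    have := hstep (z * ((y : G) : G ⧸ N)⁻¹)
    rw [inv_mul_cancel_right] at this
    rw [this]; group
  have hstepk : ∀ (z : G ⧸ N) (k : ℕ), F (z * ((y : G) : G ⧸ N) ^ k) = F z * n ^ k := by
    intro z k
    induction k with
    | zero => simp
    | succ k ih =>
        rw [pow_succ, pow_succ, ← mul_assoc, hstep, ih, mul_assoc]
  have hstepk' : ∀ (z : G ⧸ N) (k : ℕ), F (z * (((y : G) : G ⧸ N) ^ k)⁻¹) = F z * (n ^ k)⁻¹ := by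
    intro z k
    have := hstepk (z * (((y : G) : G ⧸ N) ^ k)⁻¹) k
    rw [inv_mul_cancel_right] at this
    rw [this]; group
  -- discrete log on N
  have hex : ∀ m : N, ∃ k : ℕ, n ^ k = (m : G) := by
    rintro ⟨m, hm⟩
    rw [hNgen, Subgroup.mem_zpowers_iff] at hm
    obtain ⟨k, hk⟩ := hm
    have h4 : n ^ ((k % (p : ℤ)) + (p : ℤ) * (k / (p : ℤ))) = m := by
      rw [Int.emod_add_mul_ediv]; exact hk
    rw [zpow_add, zpow_mul, zpow_natCast, hnp, one_zpow, mul_one] at h4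
    have h5 : 0 ≤ k % (p : ℤ) := Int.emod_nonneg k (by exact_mod_cast hp.ne_zero)
    refine ⟨(k % (p : ℤ)).toNat, ?_⟩
    rw [← zpow_natCast, Int.toNat_of_nonneg h5]
    exact h4
  set dl : N → ℕ := fun m => (hex m).choose with hdl
  have hdlspec : ∀ m : N, n ^ dl m = (m : G) := fun m => (hex m).choose_spec
  -- the fiber equivalence A ≃ N × fib 1
  have hard : {z : G ⧸ N // F z ∈ N} ≃ N × {z : G ⧸ N // F z = 1} := by
    refine ⟨fun a => (⟨F a.1, a.2⟩, ⟨a.1 * ((((y : G) : G ⧸ N)) ^ (dl ⟨F a.1, a.2⟩))⁻¹, ?_⟩),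
      fun b => ⟨b.2.1 * (((y : G) : G ⧸ N)) ^ (dl b.1), ?_⟩, ?_, ?_⟩
    · rw [hstepk', hdlspec ⟨F a.1, a.2⟩, mul_inv_cancel]
    · rw [hstepk, b.2.2, one_mul, hdlspec b.1]
      exact b.1.2
    · rintro ⟨z, hz⟩
      simp only
      apply Subtype.ext
      simp only
      rw [inv_mul_cancel_right]
    · rintro ⟨⟨m, hm⟩, ⟨z, hz⟩⟩
      have hFz : F (z * (((y : G) : G ⧸ N)) ^ (dl ⟨m, hm⟩)) = m := by
        rw [hstepk, hz, one_mul, hdlspec ⟨m, hm⟩]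
      ext
      · simp only [hFz]
      · simp only [hFz]
        rw [mul_inv_cancel_right]
  -- counting the subtype of G
  have hcount1 : Nat.card {x : G // x ^ p ^ i = 1}
      = Nat.card N * Nat.card {z : G ⧸ N // F z = 1} := by
    have he1 : {x : G // x ^ p ^ i = 1} ≃
        {x : G // QuotientGroup.mk x ∈ {z : G ⧸ N | F z = 1}} := by
      refine Equiv.subtypeEquivRight fun x => ?_
      rw [Set.mem_setOf_eq]
      exact (by rw [hF x])
    have he2 : {x : G // QuotientGroup.mk x ∈ {z : G ⧸ N | F z = 1}} ≃
        (QuotientGroup.mk ⁻¹' {z : G ⧸ N | F z = 1} : Set G) := Equiv.refl _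
    have he3 := QuotientGroup.preimageMkEquivSubgroupProdSet N {z : G ⧸ N | F z = 1}
    have he4 : ({z : G ⧸ N | F z = 1} : Set (G ⧸ N)) ≃ {z : G ⧸ N // F z = 1} := Equiv.refl _
    rw [Nat.card_congr (((he1.trans he2).trans he3).trans (Equiv.prodCongr (Equiv.refl _) he4)),
      Nat.card_prod]
  -- counting the subtype of the quotient
  have hcount2 : Nat.card {z : G ⧸ N // z ^ p ^ i = 1}
      = Nat.card N * Nat.card {z : G ⧸ N // F z = 1} := by
    have he5 : {z : G ⧸ N // z ^ p ^ i = 1} ≃ {z : G ⧸ N // F z ∈ N} := by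
      refine Equiv.subtypeEquivRight fun z => ?_
      induction z using QuotientGroup.induction_on with
      | _ a =>
        have h6 : ((a : G) : G ⧸ N) ^ p ^ i = ((a ^ p ^ i : G) : G ⧸ N) := by
          rw [QuotientGroup.mk_pow]
        rw [h6, hF, QuotientGroup.eq_one_iff]
    rw [Nat.card_congr (he5.trans hard), Nat.card_prod]
  -- the index part
  have hNH : N ≤ subgroupPow G (p ^ i) := by
    rw [hNgen]
    rw [Subgroup.zpowers_le]
    rw [← hyn]
    exact pow_mem_sp y _
  have hindex : (subgroupPow G (p ^ i)).index = (subgroupPow (G ⧸ N) (p ^ i)).index := by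
    rw [← sp_map (QuotientGroup.mk' N) (QuotientGroup.mk'_surjective N)]
    rw [← Subgroup.index_comap_of_surjective _ (QuotientGroup.mk'_surjective N)]
    rw [Subgroup.comap_map_eq, QuotientGroup.ker_mk', sup_eq_left.mpr hNH]
  rw [hindex, hquot, hcount2, hcount1]

end PowerfulAux
namespace PowerfulAux
open Subgroup

universe u

variable {G : Type*} [Group G] {p : ℕ}

lemma MAIN_case_zero [Finite G] :
    (subgroupPow G (p ^ 0)).index = Nat.card {x : G // x ^ p ^ 0 = 1} := by
  have h1 : subgroupPow G (p ^ 0) = ⊤ := by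
    rw [pow_zero, subgroupPow, eq_top_iff]
    intro x _
    exact Subgroup.subset_closure ⟨x, pow_one x⟩
  rw [h1, Subgroup.index_top]
  haveI : Unique {x : G // x ^ p ^ 0 = 1} :=
    { default := ⟨1, by simp⟩
      uniq := by
        rintro ⟨x, hx⟩
        rw [pow_zero, pow_one] at hx
        exact Subtype.ext hx }
  rw [Nat.card_unique]

lemma MAIN_case_bot [Finite G] {i : ℕ} (h : ∀ x : G, x ^ p ^ i = 1) :
    (subgroupPow G (p ^ i)).index = Nat.card {x : G // x ^ p ^ i = 1} := by
  rw [sp_eq_bot h, Subgroup.index_bot, Nat.card_congr (Equiv.subtypeUnivEquiv h)]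

lemma comm_mul_right_central (a v m : G) (hm : ∀ w : G, m * w = w * m) :
    ⁅a, v * m⁆ = ⁅a, v⁆ := by
  have h1 : m * a⁻¹ = a⁻¹ * m := hm a⁻¹
  simp only [commutatorElement_def]
  calc a * (v * m) * a⁻¹ * (v * m)⁻¹ = a * v * (m * a⁻¹) * m⁻¹ * v⁻¹ := by group
    _ = a * v * (a⁻¹ * m) * m⁻¹ * v⁻¹ := by rw [h1]
    _ = a * v * a⁻¹ * v⁻¹ := by group

lemma zpowers_nat_pow (hp0 : p ≠ 0) {n m : G} (hnp : n ^ p = 1)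
    (hm : m ∈ Subgroup.zpowers n) : ∃ t : ℕ, n ^ t = m := by
  rw [Subgroup.mem_zpowers_iff] at hm
  obtain ⟨k, hk⟩ := hm
  have h4 : n ^ ((k % (p : ℤ)) + (p : ℤ) * (k / (p : ℤ))) = m := by
    rw [Int.emod_add_mul_ediv]; exact hk
  rw [zpow_add, zpow_mul, zpow_natCast, hnp, one_zpow, mul_one] at h4
  have h5 : 0 ≤ k % (p : ℤ) := Int.emod_nonneg k (by exact_mod_cast hp0)
  exact ⟨(k % (p : ℤ)).toNat, by rw [← zpow_natCast, Int.toNat_of_nonneg h5]; exact h4⟩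

/-- the crunch: top-level commutator collapse. -/
lemma crunch (hp : p.Prime) (b : ℕ) (hb : 1 ≤ b)
    (hbot : ∀ w : G, w ^ p ^ (b + sft p) = 1)
    (N0 : Subgroup G) [N0.Normal] (n₀ : G) (hN0 : N0 = Subgroup.zpowers n₀)
    (hn₀c : n₀ ∈ Subgroup.center G) (hn₀p : n₀ ^ p = 1)
    (hCQ : Cstmt p (G ⧸ N0))
    (hPSQ : ∀ k : ℕ, ∀ h ∈ subgroupPow (G ⧸ N0) (p ^ k), ∃ g : G ⧸ N0, g ^ p ^ k = h)
    (g x : G) : ⁅g ^ p ^ b, x⁆ = 1 := by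
  have hs := one_le_sft p
  have hN0c : ∀ m ∈ N0, (∀ w : G, m * w = w * m) ∧ m ^ p = 1 := by
    intro m hm
    rw [hN0] at hm
    obtain ⟨t, ht⟩ := zpowers_nat_pow hp.ne_zero hn₀p hm
    subst ht
    constructor
    · intro w
      have h1 : n₀ ^ t ∈ Subgroup.center G := Subgroup.pow_mem _ hn₀c t
      exact (Subgroup.mem_center_iff.mp h1 w).symm
    · rw [← pow_mul, mul_comm, pow_mul, hn₀p, one_pow]
  set B := b + sft p - 1 with hB
  set u := g ^ p ^ (b - 1) with hu
  set d := ⁅u, x⁆ with hd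
  have hbotQ : subgroupPow (G ⧸ N0) (p ^ (b + sft p)) = ⊥ := by
    apply sp_eq_bot
    intro q
    induction q using QuotientGroup.induction_on with
    | _ w =>
      rw [← QuotientGroup.mk_pow, hbot w]
      rfl
  have hdmem : ((d : G) : G ⧸ N0) ∈ subgroupPow (G ⧸ N0) (p ^ B) := by
    have h2 := hCQ (b - 1) ((g : G) : G ⧸ N0) ((x : G) : G ⧸ N0)
    have h3 : ⁅((g : G) : G ⧸ N0) ^ p ^ (b - 1), ((x : G) : G ⧸ N0)⁆ = ((d : G) : G ⧸ N0) := by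
      rw [← QuotientGroup.mk_pow]
      exact (map_commutatorElement (QuotientGroup.mk' N0) _ _).symm
    rw [h3] at h2
    have h4 : b - 1 + sft p = B := by omega
    rwa [h4] at h2
  obtain ⟨hbar, hhbar⟩ := hPSQ B _ hdmem
  obtain ⟨h, rfl⟩ := QuotientGroup.mk'_surjective N0 hbar
  have hmemN : (h ^ p ^ B)⁻¹ * d ∈ N0 := by
    apply QuotientGroup.eq.mp
    calc ((h ^ p ^ B : G) : G ⧸ N0) = ((QuotientGroup.mk' N0) h) ^ p ^ B := by
          rw [QuotientGroup.mk_pow]; rfl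
      _ = ((d : G) : G ⧸ N0) := hhbar
  set m := (h ^ p ^ B)⁻¹ * d with hm
  have hdm : d = h ^ p ^ B * m := by rw [hm]; group
  have hmprops := hN0c m hmemN
  have hdp : d ^ p = 1 := by
    have hcomm : Commute (h ^ p ^ B) m := (hmprops.1 (h ^ p ^ B)).symm
    rw [hdm, hcomm.mul_pow, hmprops.2, mul_one]
    have h4 : (h ^ p ^ B) ^ p = h ^ p ^ (b + sft p) := by
      have hbb : B + 1 = b + sft p := by omega
      calc (h ^ p ^ B) ^ p = (h ^ p ^ B) ^ p ^ 1 := by rw [pow_one]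
        _ = h ^ p ^ (B + 1) := pow_pow_add h B 1
        _ = h ^ p ^ (b + sft p) := by rw [hbb]
    rw [h4]
    exact hbot h
  set z := ⁅u, d⁆ with hz
  have hzN0 : z ∈ N0 := by
    have h5 : ((d : G) : G ⧸ N0) * ((u : G) : G ⧸ N0) = ((u : G) : G ⧸ N0) * ((d : G) : G ⧸ N0) :=
      central_of_bot hCQ (by omega : b + sft p ≤ B + sft p) hbotQ _ hdmem _
    have h6 : ⁅((u : G) : G ⧸ N0), ((d : G) : G ⧸ N0)⁆ = 1 :=
      commutatorElement_eq_one_iff_commute.mpr h5.symm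
    have h7 : ((z : G) : G ⧸ N0) = 1 := by
      calc ((z : G) : G ⧸ N0) = ⁅((u : G) : G ⧸ N0), ((d : G) : G ⧸ N0)⁆ :=
            (map_commutatorElement (QuotientGroup.mk' N0) _ _)
        _ = 1 := h6
    exact (QuotientGroup.eq_one_iff _).mp h7
  have hzprops := hN0c z hzN0
  have hcol := comm_pow_collect' u x d z hd.symm hz.symm (fun w => (hzprops.1 w))
  have h6 : u ^ p = g ^ p ^ b := by
    have hbb : b - 1 + 1 = b := by omega
    calc u ^ p = (g ^ p ^ (b - 1)) ^ p ^ 1 := by rw [hu, pow_one]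
      _ = g ^ p ^ (b - 1 + 1) := pow_pow_add g (b - 1) 1
      _ = g ^ p ^ b := by rw [hbb]
  rw [← h6, hcol p, hdp, mul_one]
  by_cases h2 : p = 2
  · subst h2
    rw [Nat.choose_self, pow_one]
    -- kill z
    have hzform : z = ⁅u, h ^ 2 ^ B⁆ := by
      rw [hz, hdm, comm_mul_right_central _ _ _ hmprops.1]
    have hBval : B = b + 1 := by rw [hB, sft_two]; omega
    set η := h ^ 2 ^ b with hη
    have hη2 : η ^ 2 = h ^ 2 ^ B := by
      rw [hη]
      calc (h ^ 2 ^ b) ^ 2 = (h ^ 2 ^ b) ^ 2 ^ 1 := by norm_num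
        _ = h ^ 2 ^ (b + 1) := pow_pow_add h b 1
        _ = h ^ 2 ^ B := by rw [hBval]
    set δ := ⁅η, u⁆ with hδ
    have hδN0 : δ ∈ N0 := by
      have h7 := hCQ b ((h : G) : G ⧸ N0) ((u : G) : G ⧸ N0)
      have h8 : ⁅((h : G) : G ⧸ N0) ^ 2 ^ b, ((u : G) : G ⧸ N0)⁆ = ((δ : G) : G ⧸ N0) := by
        rw [← QuotientGroup.mk_pow]
        exact (map_commutatorElement (QuotientGroup.mk' N0) _ _).symm
      rw [h8, hbotQ, Subgroup.mem_bot] at h7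
      exact (QuotientGroup.eq_one_iff _).mp h7
    have hδprops := hN0c δ hδN0
    have hζ : ⁅η, δ⁆ = 1 :=
      commutatorElement_eq_one_iff_commute.mpr ((hδprops.1 η).symm)
    have hc2 := comm_pow_collect' η u δ 1 hδ.symm hζ (fun w => by rw [one_mul, mul_one]) 2
    rw [one_pow, one_mul, hδprops.2] at hc2
    rw [hzform, ← hη2]
    have h10 : ⁅u, η ^ 2⁆ = ⁅η ^ 2, u⁆⁻¹ := (comm_inv_eq (η ^ 2) u).symm
    rw [h10, hc2, inv_one]
  · obtain ⟨t, ht⟩ := hp.dvd_choose_self (by norm_num) (lt_of_le_of_ne hp.two_le (Ne.symm h2))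
    rw [ht, pow_mul, hzprops.2, one_pow]


structure Pkg (p : ℕ) (G : Type u) [Group G] : Prop where
  hC : Cstmt p G
  hPS : ∀ k : ℕ, ∀ h ∈ subgroupPow G (p ^ k), ∃ g : G, g ^ p ^ k = h
  hMAIN : ∀ i : ℕ, (subgroupPow G (p ^ i)).index = Nat.card {x : G // x ^ p ^ i = 1}

theorem pkg_all {p : ℕ} (hp : p.Prime) :
    ∀ (n : ℕ) (G : Type u) [Group G] [Finite G], Nat.card G ≤ n →
      IsPGroup p G → IsPowerful p G → Pkg p G := by
  intro n
  induction n using Nat.strong_induction_on with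
  | _ n IH =>
    intro G _ _ hcard hpG hpow
    classical
    have hs := one_le_sft p
    have hpow' : ∀ g x : G, ⁅g, x⁆ ∈ subgroupPow G (p ^ sft p) := isPowerful_comm hpow
    -- part 1 : the graded commutator condition
    have hC : Cstmt p G := by
      intro b g x
      by_cases hb : b = 0
      · subst hb
        rw [pow_zero, pow_one]
        simpa using hpow' g x
      · have hb1 : 1 ≤ b := by omega
        by_cases hbot : ∀ w : G, w ^ p ^ (b + sft p) = 1
        · by_cases htriv : ∀ w : G, w = 1
          · rw [htriv ⁅g ^ p ^ b, x⁆]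
            exact one_mem _
          · push_neg at htriv
            obtain ⟨w, hw⟩ := htriv
            haveI : Nontrivial G := ⟨⟨w, 1, hw⟩⟩
            obtain ⟨n₀, hn₀c, hn₀1, hn₀p⟩ := exists_central_orderp hp hpG
            set N0 := Subgroup.zpowers n₀ with hN0def
            haveI : N0.Normal :=
              normal_of_le_center (by rw [hN0def, Subgroup.zpowers_le]; exact hn₀c)
            have hN0ne : N0 ≠ ⊥ := by
              intro hcon
              apply hn₀1
              have h1 : n₀ ∈ N0 := by rw [hN0def]; exact Subgroup.mem_zpowers n₀
              rw [hcon, Subgroup.mem_bot] at h1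
              exact h1
            have hcard' : Nat.card (G ⧸ N0) < n :=
              lt_of_lt_of_le (card_quotient_lt hN0ne) hcard
            have pkgQ := IH (Nat.card (G ⧸ N0)) hcard' (G ⧸ N0) le_rfl
              (hpG.to_quotient N0) (isPowerful_quotient hpow N0)
            have hres := crunch hp b hb1 hbot N0 n₀ hN0def hn₀c hn₀p pkgQ.hC pkgQ.hPS g x
            rw [hres]
            exact one_mem _
        · push_neg at hbot
          obtain ⟨w, hw⟩ := hbot
          set K := subgroupPow G (p ^ (b + sft p)) with hK
          haveI : K.Normal := sp_normal _
          have hKne : K ≠ ⊥ := fun hcon => hw (pow_eq_one_of_sp_bot hcon w)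
          have hcard' : Nat.card (G ⧸ K) < n :=
            lt_of_lt_of_le (card_quotient_lt hKne) hcard
          have pkgQ := IH (Nat.card (G ⧸ K)) hcard' (G ⧸ K) le_rfl
            (hpG.to_quotient K) (isPowerful_quotient hpow K)
          have h1 := pkgQ.hC b ((g : G) : G ⧸ K) ((x : G) : G ⧸ K)
          have h2 : ⁅((g : G) : G ⧸ K) ^ p ^ b, ((x : G) : G ⧸ K)⁆
              = ((⁅g ^ p ^ b, x⁆ : G) : G ⧸ K) := by
            rw [← QuotientGroup.mk_pow]
            exact (map_commutatorElement (QuotientGroup.mk' K) _ _).symm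
          rw [h2, ← sp_map (QuotientGroup.mk' K) (QuotientGroup.mk'_surjective K)] at h1
          have h3 : ⁅g ^ p ^ b, x⁆ ∈
              Subgroup.comap (QuotientGroup.mk' K) (Subgroup.map (QuotientGroup.mk' K) K) := h1
          rwa [Subgroup.comap_map_eq, QuotientGroup.ker_mk', sup_idem] at h3
    -- exponent bookkeeping
    obtain ⟨eb, heb⟩ := exists_expBound hpG
    have hexe : ∃ m : ℕ, ∀ x : G, x ^ p ^ m = 1 := ⟨eb, heb⟩
    set e := Nat.find hexe with he_def
    have he : ∀ x : G, x ^ p ^ e = 1 := Nat.find_spec hexe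
    -- part 2 : power surjectivity
    have hPS : ∀ k : ℕ, ∀ h ∈ subgroupPow G (p ^ k), ∃ g : G, g ^ p ^ k = h := by
      intro k h hh
      by_cases hke : e ≤ k
      · have hall : ∀ x : G, x ^ p ^ k = 1 := fun x => by
          calc x ^ p ^ k = (x ^ p ^ e) ^ p ^ (k - e) := by
                rw [pow_pow_add, Nat.add_sub_cancel' hke]
            _ = 1 := by rw [he x, one_pow]
        have hbot := sp_eq_bot hall
        rw [hbot, Subgroup.mem_bot] at hh
        exact ⟨1, by rw [hh, one_pow]⟩
      · by_cases hk0 : k = 0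
        · subst hk0
          exact ⟨h, by rw [pow_zero, pow_one]⟩
        · have hk1 : 1 ≤ k := by omega
          have hke' : k < e := by omega
          have hnee : ¬ ∀ x : G, x ^ p ^ (e - 1) = 1 := Nat.find_min hexe (by omega)
          push_neg at hnee
          obtain ⟨g₀, hg₀⟩ := hnee
          obtain ⟨y, nn, hyn, hn1, hnc, hnp, hT⟩ := KEY hp hC hpow' e k he g₀ hg₀ hk1 hke'
          set N0 := Subgroup.zpowers nn with hN0def
          haveI : N0.Normal :=
            normal_of_le_center (by rw [hN0def, Subgroup.zpowers_le]; exact hnc)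
          have hN0ne : N0 ≠ ⊥ := by
            intro hcon
            apply hn1
            have h1 : nn ∈ N0 := by rw [hN0def]; exact Subgroup.mem_zpowers nn
            rw [hcon, Subgroup.mem_bot] at h1
            exact h1
          have hcard' : Nat.card (G ⧸ N0) < n :=
            lt_of_lt_of_le (card_quotient_lt hN0ne) hcard
          have pkgQ := IH (Nat.card (G ⧸ N0)) hcard' (G ⧸ N0) le_rfl
            (hpG.to_quotient N0) (isPowerful_quotient hpow N0)
          have hmem : ((h : G) : G ⧸ N0) ∈ subgroupPow (G ⧸ N0) (p ^ k) := by
            rw [← sp_map (QuotientGroup.mk' N0) (QuotientGroup.mk'_surjective N0)]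
            exact ⟨h, hh, rfl⟩
          obtain ⟨gbar, hgbar⟩ := pkgQ.hPS k _ hmem
          obtain ⟨g, rfl⟩ := QuotientGroup.mk'_surjective N0 gbar
          have hmemN : (g ^ p ^ k)⁻¹ * h ∈ N0 := by
            apply QuotientGroup.eq.mp
            calc ((g ^ p ^ k : G) : G ⧸ N0) = ((QuotientGroup.mk' N0) g) ^ p ^ k := by
                  rw [QuotientGroup.mk_pow]; rfl
              _ = ((h : G) : G ⧸ N0) := hgbar
          have hmemz : (g ^ p ^ k)⁻¹ * h ∈ Subgroup.zpowers nn := by rwa [← hN0def]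
          obtain ⟨t, ht⟩ := zpowers_nat_pow hp.ne_zero hnp hmemz
          have hTk : ∀ j : ℕ, (g * y ^ j) ^ p ^ k = g ^ p ^ k * nn ^ j := by
            intro j
            induction j with
            | zero => simp
            | succ j ih =>
                have h4 : g * y ^ (j + 1) = (g * y ^ j) * y := by rw [pow_succ]; group
                rw [h4, hT, ih, pow_succ, mul_assoc]
          refine ⟨g * y ^ t, ?_⟩
          rw [hTk t, ht, mul_inv_cancel_left]
    -- part 3 : the counting statement
    have hMAIN : ∀ i : ℕ,
        (subgroupPow G (p ^ i)).index = Nat.card {x : G // x ^ p ^ i = 1} := by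
      intro i
      by_cases hi0 : i = 0
      · subst hi0
        exact MAIN_case_zero
      · by_cases hie : e ≤ i
        · refine MAIN_case_bot fun x => ?_
          calc x ^ p ^ i = (x ^ p ^ e) ^ p ^ (i - e) := by
                rw [pow_pow_add, Nat.add_sub_cancel' hie]
            _ = 1 := by rw [he x, one_pow]
        · have hi1 : 1 ≤ i := by omega
          have hie' : i < e := by omega
          have hnee : ¬ ∀ x : G, x ^ p ^ (e - 1) = 1 := Nat.find_min hexe (by omega)
          push_neg at hnee
          obtain ⟨g₀, hg₀⟩ := hnee
          obtain ⟨y, nn, hyn, hn1, hnc, hnp, hT⟩ := KEY hp hC hpow' e i he g₀ hg₀ hi1 hie'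
          set N0 := Subgroup.zpowers nn with hN0def
          haveI : N0.Normal :=
            normal_of_le_center (by rw [hN0def, Subgroup.zpowers_le]; exact hnc)
          have hN0ne : N0 ≠ ⊥ := by
            intro hcon
            apply hn1
            have h1 : nn ∈ N0 := by rw [hN0def]; exact Subgroup.mem_zpowers nn
            rw [hcon, Subgroup.mem_bot] at h1
            exact h1
          have hcard' : Nat.card (G ⧸ N0) < n :=
            lt_of_lt_of_le (card_quotient_lt hN0ne) hcard
          have pkgQ := IH (Nat.card (G ⧸ N0)) hcard' (G ⧸ N0) le_rfl
            (hpG.to_quotient N0) (isPowerful_quotient hpow N0)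
          exact MAIN_step hp i hi1 y nn N0 hN0def
            (by rw [hN0def, Subgroup.zpowers_le]; exact hnc) hyn hn1 hnp hT (pkgQ.hMAIN i)
    exact ⟨hC, hPS, hMAIN⟩

end PowerfulAux

theorem stmt15 (p : ℕ) (hp : p.Prime) (G : Type*) [Group G] [Finite G]
    (hpG : IsPGroup p G) (hpow : IsPowerful p G) (i : ℕ) :
    (subgroupPow G (p ^ i)).index = Nat.card {x : G // x ^ p ^ i = 1} :=
  (PowerfulAux.pkg_all hp (Nat.card G) G le_rfl hpG hpow).hMAIN i
end

section
/- Let G be a powerful finite p-group of exponent p^e and let 0 ≤ i ≤ e−2. Then the set X = {x ∈ G : x^{p^i} ∈ G^{p^{e-1}}} equals Ω_{\{i\}}(G) · G^{p^{e-i-1}}, where Ω_{\{i\}}(G) = {x ∈ G : x^{p^i} = 1}, and moreover |X| = |Ω_{\{i\}}(G)| · |G^{p^{e-i-1}}| / |Ω_{\{i\}}(G^{p^{e-i-1}})|. -/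
namespace PowAux

open scoped commutatorElement

variable {G : Type*} [Group G]

theorem mem_subgroupPow {n : ℕ} (g : G) : g ^ n ∈ subgroupPow G n :=
  Subgroup.subset_closure ⟨g, rfl⟩

theorem subgroupPow_le_of_dvd {n m : ℕ} (h : n ∣ m) :
    subgroupPow G m ≤ subgroupPow G n := by
  rcases h with ⟨c, rfl⟩
  refine (Subgroup.closure_le _).mpr ?_
  rintro x ⟨g, rfl⟩
  have : g ^ (n * c) = (g ^ c) ^ n := by rw [mul_comm, pow_mul]
  rw [this]
  exact mem_subgroupPow _

instance subgroupPow_normal (n : ℕ) : (subgroupPow G n).Normal := by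
  constructor
  intro x hx g
  induction hx using Subgroup.closure_induction with
  | mem y hy =>
    obtain ⟨h, rfl⟩ := hy
    have : g * h ^ n * g⁻¹ = (g * h * g⁻¹) ^ n := (conj_pow).symm
    rw [this]; exact mem_subgroupPow _
  | one => simpa using (subgroupPow G n).one_mem
  | mul y z _ _ hy hz =>
    have : g * (y * z) * g⁻¹ = (g * y * g⁻¹) * (g * z * g⁻¹) := by group
    rw [this]; exact mul_mem hy hz
  | inv y _ hy =>
    have : g * y⁻¹ * g⁻¹ = (g * y * g⁻¹)⁻¹ := by group
    rw [this]; exact inv_mem hy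

theorem subgroupPow_eq_bot_iff {n : ℕ} :
    subgroupPow G n = ⊥ ↔ ∀ g : G, g ^ n = 1 := by
  constructor
  · intro h g
    have := h ▸ mem_subgroupPow (n := n) g
    simpa [Subgroup.mem_bot] using this
  · intro h
    refine le_antisymm ?_ bot_le
    refine (Subgroup.closure_le _).mpr ?_
    rintro x ⟨g, rfl⟩
    simp [Subgroup.mem_bot, h g]

theorem subgroupPow_one_eq_top : subgroupPow G 1 = ⊤ := by
  refine le_antisymm le_top ?_
  intro x _
  exact Subgroup.subset_closure ⟨x, pow_one x⟩

theorem subgroupPow_map {G' : Type*} [Group G'] (f : G →* G') (hf : Function.Surjective f)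
    (n : ℕ) : (subgroupPow G n).map f = subgroupPow G' n := by
  rw [subgroupPow, MonoidHom.map_closure]
  congr 1
  ext y
  constructor
  · rintro ⟨x, ⟨g, rfl⟩, rfl⟩
    exact ⟨f g, (map_pow f g n).symm⟩
  · rintro ⟨g', rfl⟩
    obtain ⟨g, rfl⟩ := hf g'
    exact ⟨g ^ n, ⟨g, rfl⟩, map_pow f g n⟩

theorem isPowerful_of_surjective {G' : Type*} [Group G'] (f : G →* G')
    (hf : Function.Surjective f) {p : ℕ} (h : IsPowerful p G) : IsPowerful p G' := by
  have key : ∀ k : ℕ, commutator G ≤ subgroupPow G k → commutator G' ≤ subgroupPow G' k := by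
    intro k hk
    have h1 : commutator G' = (commutator G).map f := by
      rw [commutator, commutator, Subgroup.map_commutator,
        Subgroup.map_top_of_surjective f hf]
    rw [h1, ← subgroupPow_map f hf]
    exact Subgroup.map_mono hk
  unfold IsPowerful at h ⊢
  split_ifs at h ⊢ with h2
  · exact key 4 h
  · exact key p h

theorem card_quotient_lt [Finite G] (K : Subgroup G) [K.Normal] (hK : K ≠ ⊥) :
    Nat.card (G ⧸ K) < Nat.card G := by
  have h1 : Nat.card G = Nat.card (G ⧸ K) * Nat.card K :=
    Subgroup.card_eq_card_quotient_mul_card_subgroup K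
  have h2 : 1 < Nat.card K := (Subgroup.one_lt_card_iff_ne_bot K).mpr hK
  have h3 : 0 < Nat.card (G ⧸ K) := Nat.card_pos
  nlinarith

theorem swap_pow (v c : G) (hcv : c * v = v * c) (k : ℕ) : c ^ k * v = v * c ^ k :=
  ((Commute.pow_left hcv k)).eq

/-- key semicommutation power identity (class-2 style). -/
theorem pow_aux_comm (u v c : G) (hcu : c * u = u * c) (hcv : c * v = v * c)
    (hvu : v * u = u * (v * c)) (n : ℕ) :
    (u * v) ^ n = u ^ n * (v ^ n * c ^ n.choose 2) := by
  have hpow : ∀ k : ℕ, v ^ k * u = u * (v ^ k * c ^ k) := by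
    intro k
    induction k with
    | zero => simp
    | succ k ih =>
      calc v ^ (k+1) * u = v * (v ^ k * u) := by rw [pow_succ']; group
      _ = v * (u * (v ^ k * c ^ k)) := by rw [ih]
      _ = (v * u) * (v ^ k * c ^ k) := by group
      _ = (u * (v * c)) * (v ^ k * c ^ k) := by rw [hvu]
      _ = u * (v * ((c * v ^ k) * c ^ k)) := by group
      _ = u * (v * ((v ^ k * c) * c ^ k)) := by rw [(swap_pow c v hcv.symm k).symm]
      _ = u * ((v * v ^ k) * (c * c ^ k)) := by group
      _ = u * (v ^ (k+1) * c ^ (k+1)) := by rw [← pow_succ', ← pow_succ']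
  induction n with
  | zero => simp
  | succ n ih =>
    have harith : (n+1).choose 2 = n.choose 2 + n := by
      rw [Nat.choose_succ_succ]
      simp [Nat.choose_one_right, Nat.add_comm]
    calc (u * v) ^ (n+1) = (u * v) ^ n * (u * v) := pow_succ _ _
    _ = (u ^ n * (v ^ n * c ^ n.choose 2)) * (u * v) := by rw [ih]
    _ = u ^ n * (v ^ n * ((c ^ n.choose 2 * u) * v)) := by group
    _ = u ^ n * (v ^ n * ((u * c ^ n.choose 2) * v)) := by rw [swap_pow u c hcu (n.choose 2)]
    _ = u ^ n * ((v ^ n * u) * (c ^ n.choose 2 * v)) := by group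
    _ = u ^ n * ((u * (v ^ n * c ^ n)) * (c ^ n.choose 2 * v)) := by rw [hpow n]
    _ = u ^ n * ((u * (v ^ n * c ^ n)) * (v * c ^ n.choose 2)) := by
        rw [swap_pow v c hcv (n.choose 2)]
    _ = (u ^ n * u) * (v ^ n * ((c ^ n * v) * c ^ n.choose 2)) := by group
    _ = (u ^ n * u) * (v ^ n * ((v * c ^ n) * c ^ n.choose 2)) := by rw [swap_pow v c hcv n]
    _ = (u ^ n * u) * ((v ^ n * v) * (c ^ n.choose 2 * c ^ n)) := by group
    _ = u ^ (n+1) * (v ^ (n+1) * c ^ ((n+1).choose 2)) := by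
        rw [← pow_succ, ← pow_succ, harith, pow_add]
        simp [pow_succ, pow_add]

theorem pow_choose_two_eq_one {p : ℕ} (hp : p.Prime) (hp2 : p ≠ 2) (c : G) (hc : c ^ p = 1) :
    c ^ p.choose 2 = 1 := by
  obtain ⟨k, hk⟩ := hp.odd_of_ne_two hp2
  have h1 : p.choose 2 = p * k := by
    rw [Nat.choose_two_right]
    subst hk
    simp [Nat.mul_sub_one]
    ring_nf
    omega
  rw [h1, pow_mul, hc, one_pow]

/-- a nontrivial normal subgroup of a finite p-group meets the center nontrivially -/
theorem exists_center_inter {p : ℕ} (hp : p.Prime) [Finite G] (hpG : IsPGroup p G)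
    (K : Subgroup G) [K.Normal] (hK : K ≠ ⊥) :
    ∃ z : G, z ∈ K ∧ (∀ g : G, g * z = z * g) ∧ z ≠ 1 := by
  haveI : Fact p.Prime := ⟨hp⟩
  have hpact : IsPGroup p (ConjAct G) := fun g => hpG (ConjAct.ofConjAct g)
  have hfix : (1 : K) ∈ MulAction.fixedPoints (ConjAct G) K := by
    intro g
    simp
  have hdvd : p ∣ Nat.card K := by
    obtain ⟨k, hk⟩ := IsPGroup.iff_card.mp (hpG.to_subgroup K)
    have h2 : 1 < Nat.card K := (Subgroup.one_lt_card_iff_ne_bot K).mpr hK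
    rcases Nat.eq_zero_or_pos k with hk0 | hkpos
    · rw [hk0, pow_zero] at hk; omega
    · rw [hk]; exact dvd_pow_self p hkpos.ne'
  obtain ⟨b, hbfix, hbne⟩ :=
    hpact.exists_fixed_point_of_prime_dvd_card_of_fixed_point (K : Subgroup G) hdvd hfix
  refine ⟨(b : G), b.2, ?_, ?_⟩
  · intro g
    have := hbfix (ConjAct.toConjAct g)
    have h2 : g * (b : G) * g⁻¹ = (b : G) := by
      have h3 := congrArg (Subtype.val) this
      rw [ConjAct.Subgroup.val_conj_smul] at h3
      simpa [ConjAct.toConjAct_smul] using h3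
    calc g * (b : G) = (g * (b : G) * g⁻¹) * g := by group
    _ = (b : G) * g := by rw [h2]
  · intro h
    apply hbne
    apply Subtype.ext
    simp [h]

/-- produce a nontrivial central exponent-p subgroup inside a nontrivial normal subgroup -/
theorem exists_centralOmega {p : ℕ} (hp : p.Prime) [Finite G] (hpG : IsPGroup p G)
    (K : Subgroup G) [K.Normal] (hK : K ≠ ⊥) :
    ∃ C : Subgroup G, C.Normal ∧ C ≠ ⊥ ∧ C ≤ K ∧
      (∀ c ∈ C, ∀ g : G, c * g = g * c) ∧ (∀ c ∈ C, c ^ p = 1) := by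
  obtain ⟨z, hzK, hzc, hzne⟩ := exists_center_inter hp hpG K hK
  obtain ⟨k, hk⟩ := hpG z
  have key : ∀ k : ℕ, ∀ z : G, z ≠ 1 → z ^ p ^ k = 1 →
      ∃ m : ℕ, z ^ m ≠ 1 ∧ (z ^ m) ^ p = 1 := by
    intro k
    induction k with
    | zero => intro z hz h1; simp at h1; exact absurd h1 hz
    | succ k ih =>
      intro z hz h1
      by_cases h2 : z ^ p ^ k = 1
      · exact ih z hz h2
      · refine ⟨p ^ k, h2, ?_⟩
        rw [← pow_mul, ← pow_succ]
        exact h1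
  obtain ⟨m, hm1, hmp⟩ := key k z hzne hk
  set w := z ^ m with hw
  have hwc : ∀ g : G, w * g = g * w := by
    intro g
    exact (Commute.pow_left (show Commute z g from (hzc g).symm) m).eq
  refine ⟨Subgroup.zpowers w, ?_, ?_, ?_, ?_, ?_⟩
  · constructor
    intro x hx g
    obtain ⟨j, rfl⟩ := hx
    have : g * w ^ j * g⁻¹ = w ^ j := by
      have hcwj : w ^ j * g = g * w ^ j := (Commute.zpow_left (show Commute w g from hwc g) j).eq
      rw [← hcwj]; group
    rw [this]; exact ⟨j, rfl⟩
  · intro h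
    apply hm1
    have : w ∈ (⊥ : Subgroup G) := h ▸ Subgroup.mem_zpowers w
    simpa using this
  · have hwK : w ∈ K := pow_mem hzK m
    exact (Subgroup.zpowers_le).mpr hwK
  · intro c hc g
    obtain ⟨j, rfl⟩ := hc
    exact (Commute.zpow_left (show Commute w g from hwc g) j).eq
  · intro c hc
    obtain ⟨j, rfl⟩ := hc
    rw [← zpow_natCast, ← zpow_mul, mul_comm, zpow_mul]
    rw [zpow_natCast, hmp]
    simp

/-- central elements with `x ^ p = 1` form a subgroup. -/
def torsionCenter (p : ℕ) (G : Type*) [Group G] : Subgroup G where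
  carrier := {x : G | x ∈ Subgroup.center G ∧ x ^ p = 1}
  one_mem' := ⟨Subgroup.one_mem _, one_pow p⟩
  mul_mem' := by
    rintro a b ⟨ha, hap⟩ ⟨hb, hbp⟩
    refine ⟨Subgroup.mul_mem _ ha hb, ?_⟩
    have hc : Commute a b := (Subgroup.mem_center_iff.mp ha b).symm
    rw [hc.mul_pow, hap, hbp, one_mul]
  inv_mem' := by
    rintro a ⟨ha, hap⟩
    exact ⟨Subgroup.inv_mem _ ha, by rw [inv_pow, hap, inv_one]⟩

theorem mem_torsionCenter {p : ℕ} {x : G} :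
    x ∈ torsionCenter p G ↔ x ∈ Subgroup.center G ∧ x ^ p = 1 := Iff.rfl

/-! ## the powers subgroups indexed by exponents of `p`, and transfer lemmas -/

/-- powers subgroup indexed by exponent of p -/
def HP (p : ℕ) (G : Type*) [Group G] (k : ℕ) : Subgroup G := subgroupPow G (p ^ k)

theorem mem_HP {p k : ℕ} (g : G) : g ^ p ^ k ∈ HP p G k := mem_subgroupPow g

instance HP_normal (p k : ℕ) : (HP p G k).Normal := subgroupPow_normal _

theorem HP_mono (p : ℕ) (hp : 1 ≤ p) {a b : ℕ} (h : a ≤ b) : HP p G b ≤ HP p G a :=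
  subgroupPow_le_of_dvd (pow_dvd_pow p h)

theorem HP_zero_eq_top (p : ℕ) : HP p G 0 = ⊤ := by
  rw [HP, pow_zero]; exact subgroupPow_one_eq_top

theorem HP_eq_bot_iff {p k : ℕ} : HP p G k = ⊥ ↔ ∀ g : G, g ^ p ^ k = 1 :=
  subgroupPow_eq_bot_iff

theorem pow_pow_eq (g : G) (p a b : ℕ) : (g ^ p ^ a) ^ p ^ b = g ^ p ^ (a + b) := by
  rw [← pow_mul, ← pow_add]

theorem pow_eq_one_of_le {p f i : ℕ} (hf : ∀ g : G, g ^ p ^ f = 1) (hfi : f ≤ i) (g : G) :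
    g ^ p ^ i = 1 := by
  have : g ^ p ^ i = (g ^ p ^ f) ^ p ^ (i - f) := by
    rw [pow_pow_eq, Nat.add_sub_cancel' hfi]
  rw [this, hf, one_pow]

/-- the depth constant: 1 for odd p, 2 for p = 2. -/
def dep (p : ℕ) : ℕ := if p = 2 then 2 else 1

def PkgI (p : ℕ) (G : Type*) [Group G] : Prop :=
  ∀ (m : ℕ) (u t : G), u ∈ HP p G m → ⁅u, t⁆ ∈ HP p G (m + dep p)

def PkgII (p : ℕ) (G : Type*) [Group G] : Prop :=
  ∀ (a : ℕ) (u : G), u ∈ HP p G a → u ^ p ∈ HP p G (a + 1)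

def PkgIII (p : ℕ) (G : Type*) [Group G] : Prop :=
  ∀ (i m : ℕ), (∀ g : G, g ^ p ^ (i + m + 1) = 1) → ∀ x y : G, y ∈ HP p G m →
    (x * y) ^ p ^ i = x ^ p ^ i * y ^ p ^ i

theorem PkgII_iter {p : ℕ} (h2 : PkgII p G) (a b : ℕ) (u : G) (hu : u ∈ HP p G a) :
    u ^ p ^ b ∈ HP p G (a + b) := by
  induction b with
  | zero => simpa using hu
  | succ b ih =>
    have h : u ^ p ^ (b+1) = (u ^ p ^ b) ^ p := by rw [← pow_mul, pow_succ]
    rw [h, ← Nat.add_assoc]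
    exact h2 (a+b) _ ih

section Transfer

variable {p : ℕ} (K : Subgroup G) [K.Normal]

theorem HP_quot_mem {k : ℕ} {u : G} (hu : u ∈ HP p G k) :
    (QuotientGroup.mk' K) u ∈ HP p (G ⧸ K) k := by
  have := subgroupPow_map (QuotientGroup.mk' K) (QuotientGroup.mk'_surjective K) (p ^ k)
  rw [HP, ← this]
  exact Subgroup.mem_map_of_mem _ hu

theorem HP_quot_pull {k : ℕ} (hle : K ≤ HP p G k) {u : G}
    (hu : (QuotientGroup.mk' K) u ∈ HP p (G ⧸ K) k) : u ∈ HP p G k := by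
  have hmap := subgroupPow_map (QuotientGroup.mk' K) (QuotientGroup.mk'_surjective K) (p ^ k)
  rw [HP, ← hmap, Subgroup.mem_map] at hu
  obtain ⟨v, hv, hvu⟩ := hu
  have : v⁻¹ * u ∈ K := by
    rw [← QuotientGroup.ker_mk' K, MonoidHom.mem_ker, map_mul, map_inv, hvu]
    simp
  have h2 : u = v * (v⁻¹ * u) := by group
  rw [h2]
  exact mul_mem hv (hle this)

theorem quot_exp {n : ℕ} (h : ∀ g : G, g ^ n ∈ K) : ∀ q : G ⧸ K, q ^ n = 1 := by
  intro q
  obtain ⟨g, rfl⟩ := QuotientGroup.mk'_surjective K q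
  rw [← map_pow]
  rw [← QuotientGroup.ker_mk' K] at h
  exact h g

theorem quot_eq_one_iff {u : G} : (QuotientGroup.mk' K) u = 1 ↔ u ∈ K :=
  QuotientGroup.eq_one_iff u

end Transfer

theorem commutator_mem_dep {p : ℕ} (hpow : IsPowerful p G) (x y : G) :
    ⁅x, y⁆ ∈ HP p G (dep p) := by
  have hx : ⁅x, y⁆ ∈ commutator G :=
    Subgroup.commutator_mem_commutator (Subgroup.mem_top x) (Subgroup.mem_top y)
  unfold IsPowerful at hpow
  unfold HP dep
  split_ifs at hpow ⊢ with h
  · subst h; norm_num; exact hpow hx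
  · rw [pow_one]; exact hpow hx

universe u

theorem master_step {p : ℕ} (hp : p.Prime) (G : Type u) [Group G] [Finite G]
    (hpG : IsPGroup p G) (hpow : IsPowerful p G)
    (IH : ∀ (K : Type u) [Group K] [Finite K], Nat.card K < Nat.card G →
      IsPGroup p K → IsPowerful p K → PkgI p K ∧ PkgII p K ∧ PkgIII p K) :
    PkgI p G ∧ PkgII p G ∧ PkgIII p G := by
  haveI : Fact p.Prime := ⟨hp⟩
  obtain ⟨nn, hn⟩ := IsPGroup.iff_card.mp hpG
  have hedvd : Monoid.exponent G ∣ p ^ nn := by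
    refine Monoid.exponent_dvd_of_forall_pow_eq_one (fun g => ?_)
    rw [← hn]
    exact pow_card_eq_one'
  obtain ⟨f, hfn, hexpf⟩ := (Nat.dvd_prime_pow hp).mp hedvd
  have hpowf : ∀ g : G, g ^ p ^ f = 1 := fun g => by
    rw [← hexpf]; exact Monoid.pow_exponent_eq_one g
  have hexp_dvd_iff : ∀ t, (∀ g : G, g ^ p ^ t = 1) ↔ f ≤ t := by
    intro t
    constructor
    · intro h
      have h2 := Monoid.exponent_dvd_of_forall_pow_eq_one h
      rw [hexpf] at h2
      exact (Nat.pow_dvd_pow_iff_le_right hp.one_lt).mp h2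
    · intro h g
      exact pow_eq_one_of_le hpowf h g
  have hbot : ∀ t, HP p G t = ⊥ ↔ f ≤ t := fun t => HP_eq_bot_iff.trans (hexp_dvd_iff t)
  rcases Nat.eq_zero_or_pos f with hf0 | hfpos
  · -- trivial case : exponent 1
    have htriv : ∀ g : G, g = 1 := by
      intro g
      have := hpowf g
      rw [hf0] at this
      simpa using this
    refine ⟨?_, ?_, ?_⟩
    · intro m u t _
      have h1 : ⁅u, t⁆ = 1 := by rw [htriv u, htriv t]; simp
      rw [h1]; exact one_mem _
    · intro a u _
      rw [htriv (u ^ p)]; exact one_mem _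
    · intro i m _ x y _
      rw [htriv x, htriv y]; simp
  -- main case
  have QPkg : ∀ (K : Subgroup G) [K.Normal], K ≠ ⊥ →
      PkgI p (G ⧸ K) ∧ PkgII p (G ⧸ K) ∧ PkgIII p (G ⧸ K) := by
    intro K hKN hKne
    exact IH (G ⧸ K) (card_quotient_lt K hKne) (hpG.to_quotient K)
      (isPowerful_of_surjective (QuotientGroup.mk' K) (QuotientGroup.mk'_surjective K) hpow)
  have freeI : ∀ m, m + dep p < f → ∀ (u t : G), u ∈ HP p G m → ⁅u, t⁆ ∈ HP p G (m + dep p) := by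
    intro m hm u t hu
    have hTne : HP p G (m + dep p) ≠ ⊥ := by rw [Ne, hbot]; omega
    obtain ⟨C, hCn, hCne, hCle, _, _⟩ := exists_centralOmega hp hpG _ hTne
    haveI := hCn
    obtain ⟨Q1, -, -⟩ := QPkg C hCne
    have h2 := Q1 m _ ((QuotientGroup.mk' C) t) (HP_quot_mem C hu)
    rw [← map_commutatorElement] at h2
    exact HP_quot_pull C hCle h2
  have freeII : ∀ a, a + 1 < f → ∀ u : G, u ∈ HP p G a → u ^ p ∈ HP p G (a + 1) := by
    intro a ha u hu
    have hTne : HP p G (a + 1) ≠ ⊥ := by rw [Ne, hbot]; omega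
    obtain ⟨C, hCn, hCne, hCle, _, _⟩ := exists_centralOmega hp hpG _ hTne
    haveI := hCn
    obtain ⟨-, Q2, -⟩ := QPkg C hCne
    have h2 := Q2 a _ (HP_quot_mem C hu)
    rw [← map_pow] at h2
    exact HP_quot_pull C hCle h2
  have freeII_iter : ∀ b a, a + b < f → ∀ u : G, u ∈ HP p G a → u ^ p ^ b ∈ HP p G (a + b) := by
    intro b
    induction b with
    | zero => intro a _ u hu; simpa using hu
    | succ b ih =>
      intro a ha u hu
      have h1 : u ^ p ^ (b + 1) = (u ^ p ^ b) ^ p := by rw [← pow_mul, pow_succ]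
      have h2 : a + (b + 1) = (a + b) + 1 := by omega
      rw [h1, h2]
      exact freeII (a + b) (by omega) _ (ih a (by omega) u hu)
  -- the distinguished central subgroup in the top layer
  have hZ1ne : HP p G (f - 1) ≠ ⊥ := by rw [Ne, hbot]; omega
  obtain ⟨C, hCnorm, hCne, hCle, hCcen, hCp⟩ := exists_centralOmega hp hpG (HP p G (f-1)) hZ1ne
  haveI := hCnorm
  obtain ⟨QC1, QC2, QC3⟩ := QPkg C hCne
  have hexpQ : ∀ q : G ⧸ C, q ^ p ^ f = 1 :=
    quot_exp C (fun g => by rw [hpowf g]; exact one_mem C)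
  have hbotQ : ∀ t, f ≤ t → HP p (G ⧸ C) t = ⊥ := fun t ht =>
    HP_eq_bot_iff.mpr (fun q => pow_eq_one_of_le hexpQ ht q)
  have modC1 : ∀ (u t : G), u ∈ HP p G (f - 1) → ⁅u, t⁆ ∈ C := by
    intro u t hu
    have h2 := QC1 (f-1) _ ((QuotientGroup.mk' C) t) (HP_quot_mem C hu)
    rw [hbotQ (f - 1 + dep p) (by unfold dep; split_ifs <;> omega)] at h2
    rw [← map_commutatorElement, Subgroup.mem_bot] at h2
    exact (quot_eq_one_iff C).mp h2
  have modC2 : p = 2 → ∀ (u t : G), u ∈ HP p G (f - 2) → ⁅u, t⁆ ∈ C := by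
    intro hp2 u t hu
    have h2 := QC1 (f-2) _ ((QuotientGroup.mk' C) t) (HP_quot_mem C hu)
    rw [hbotQ (f - 2 + dep p) (by unfold dep; rw [if_pos hp2]; omega)] at h2
    rw [← map_commutatorElement, Subgroup.mem_bot] at h2
    exact (quot_eq_one_iff C).mp h2
  -- the top-layer structure facts (proved by parity cases)
  obtain ⟨hcen, hom, E1⟩ :
      (∀ m, f ≤ m + dep p → HP p G m ≤ Subgroup.center G) ∧
      (∀ u ∈ HP p G (f - 1), u ^ p = 1) ∧
      (∀ x y : G, y ∈ HP p G (f - 2) → (x * y) ^ p = x ^ p * y ^ p) := by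
    have hgen_pow : ∀ g : G, (g ^ p ^ (f-1)) ^ p = 1 := by
      intro g
      have hfe : f - 1 + 1 = f := by omega
      have h1 : (g ^ p ^ (f-1)) ^ p = g ^ p ^ f := by
        rw [← pow_mul, ← pow_succ, hfe]
      rw [h1]; exact hpowf g
    -- a reusable "conjugation kills" computation
    have conjkill : ∀ (h t z : G), z * h = t * h * t⁻¹ → (∀ g : G, z * g = g * z) →
        z ^ p = 1 → t * h ^ p * t⁻¹ = h ^ p := by
      intro h t z hz hzc hzp
      have h1 : t * h ^ p * t⁻¹ = (t * h * t⁻¹) ^ p := conj_pow.symm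
      rw [h1, ← hz, Commute.mul_pow (hzc h), hzp, one_mul]
    have brack : ∀ (t h : G), ⁅t, h⁆ * h = t * h * t⁻¹ := by
      intro t h
      rw [commutatorElement_def]
      group
    by_cases hp2 : p = 2
    · -- p = 2
      have hdep : dep p = 2 := by unfold dep; rw [if_pos hp2]
      by_cases hf2 : f ≤ 2
      · -- abelian case
        have hab : ∀ x y : G, Commute x y := by
          intro x y
          have h1 := commutator_mem_dep hpow x y
          rw [hdep] at h1
          rw [(hbot 2).mpr hf2, Subgroup.mem_bot] at h1
          exact commutatorElement_eq_one_iff_commute.mp h1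
        have hcen0 : ∀ m, HP p G m ≤ Subgroup.center G := by
          intro m u _
          exact Subgroup.mem_center_iff.mpr (fun g => hab g u)
        have hom0 : ∀ u ∈ HP p G (f - 1), u ^ p = 1 := by
          intro u hu
          have htc : HP p G (f-1) ≤ torsionCenter p G := by
            rw [HP]
            refine (Subgroup.closure_le _).mpr ?_
            rintro x ⟨g, rfl⟩
            exact ⟨hcen0 (f-1) (mem_HP g), hgen_pow g⟩
          exact (htc hu).2
        exact ⟨fun m _ => hcen0 m, hom0,
          fun x y _ => Commute.mul_pow (hab x y) p⟩
      · -- p = 2, f ≥ 3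
        have hZ1cen : HP p G (f-1) ≤ Subgroup.center G := by
          rw [HP]
          refine (Subgroup.closure_le _).mpr ?_
          rintro x ⟨g, rfl⟩
          set h := g ^ p ^ (f-2) with hh
          have hx : g ^ p ^ (f-1) = h ^ p := by
            have hfe : f - 2 + 1 = f - 1 := by omega
            rw [hh, ← pow_mul, ← pow_succ, hfe]
          refine Subgroup.mem_center_iff.mpr (fun t => ?_)
          have hzC : ⁅t, h⁆ ∈ C := by
            rw [← commutatorElement_inv]
            exact inv_mem (modC2 hp2 h t (mem_HP g))
          have hkill := conjkill h t ⁅t, h⁆ (brack t h) (hCcen _ hzC) (hCp _ hzC)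
          rw [hx]
          calc t * h ^ p = (t * h ^ p * t⁻¹) * t := by group
          _ = h ^ p * t := by rw [hkill]
        have htc : HP p G (f-1) ≤ torsionCenter p G := by
          rw [HP]
          refine (Subgroup.closure_le _).mpr ?_
          rintro x ⟨g, rfl⟩
          exact ⟨hZ1cen (mem_HP g), hgen_pow g⟩
        have hom0 : ∀ u ∈ HP p G (f - 1), u ^ p = 1 := fun u hu => (htc hu).2
        have hZ2cen : HP p G (f-2) ≤ Subgroup.center G := by
          rw [HP]
          refine (Subgroup.closure_le _).mpr ?_
          rintro x ⟨g, rfl⟩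
          set h := g ^ p ^ (f-3) with hh
          have hx : g ^ p ^ (f-2) = h ^ p := by
            have hfe : f - 3 + 1 = f - 2 := by omega
            rw [hh, ← pow_mul, ← pow_succ, hfe]
          refine Subgroup.mem_center_iff.mpr (fun t => ?_)
          have hzZ : ⁅t, h⁆ ∈ HP p G (f-1) := by
            rw [← commutatorElement_inv]
            have h2 := freeI (f-3) (by rw [hdep]; omega) h t (mem_HP g)
            rw [hdep] at h2
            have h3 : f - 3 + 2 = f - 1 := by omega
            rw [h3] at h2
            exact inv_mem h2
          have hzc : ∀ g' : G, ⁅t, h⁆ * g' = g' * ⁅t, h⁆ := by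
            intro g'
            exact (Subgroup.mem_center_iff.mp (hZ1cen hzZ) g').symm
          have hkill := conjkill h t ⁅t, h⁆ (brack t h) hzc (hom0 _ hzZ)
          rw [hx]
          calc t * h ^ p = (t * h ^ p * t⁻¹) * t := by group
          _ = h ^ p * t := by rw [hkill]
        refine ⟨?_, hom0, ?_⟩
        · intro m hm
          rw [hdep] at hm
          refine le_trans (HP_mono p hp.one_lt.le (show f - 2 ≤ m by omega)) hZ2cen
        · intro x y hy
          have hc : Commute x y := by
            exact Subgroup.mem_center_iff.mp (hZ2cen hy) x
          exact Commute.mul_pow hc p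
    · -- p odd
      have hdep : dep p = 1 := by unfold dep; rw [if_neg hp2]
      by_cases hf1 : f ≤ 1
      · -- abelian case
        have hab : ∀ x y : G, Commute x y := by
          intro x y
          have h1 := commutator_mem_dep hpow x y
          rw [hdep] at h1
          rw [(hbot 1).mpr hf1, Subgroup.mem_bot] at h1
          exact commutatorElement_eq_one_iff_commute.mp h1
        have hcen0 : ∀ m, HP p G m ≤ Subgroup.center G := by
          intro m u _
          exact Subgroup.mem_center_iff.mpr (fun g => hab g u)
        have hom0 : ∀ u ∈ HP p G (f - 1), u ^ p = 1 := by
          intro u hu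
          have htc : HP p G (f-1) ≤ torsionCenter p G := by
            rw [HP]
            refine (Subgroup.closure_le _).mpr ?_
            rintro x ⟨g, rfl⟩
            exact ⟨hcen0 (f-1) (mem_HP g), hgen_pow g⟩
          exact (htc hu).2
        exact ⟨fun m _ => hcen0 m, hom0,
          fun x y _ => Commute.mul_pow (hab x y) p⟩
      · -- p odd, f ≥ 2
        -- first : exponent of the top layer
        have hom0 : ∀ u ∈ HP p G (f - 1), u ^ p = 1 := by
          intro u hu
          have hu' : u ∈ Subgroup.closure {x : G | ∃ g : G, g ^ p ^ (f-1) = x} := hu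
          clear hu
          induction hu' using Subgroup.closure_induction with
          | mem x hx =>
            obtain ⟨g, rfl⟩ := hx
            exact hgen_pow g
          | one => rw [one_pow]
          | mul x y hx hy ihx ihy =>
            set c := y⁻¹ * x⁻¹ * y * x with hcdef
            have hcC : c ∈ C := by
              have h1 : ⁅y⁻¹, x⁻¹⁆ ∈ C := modC1 y⁻¹ x⁻¹ (inv_mem hy)
              have h2 : ⁅y⁻¹, x⁻¹⁆ = c := by
                rw [commutatorElement_def, hcdef]
                group
              rwa [h2] at h1
            have hcomm := pow_aux_comm x y c (hCcen c hcC x) (hCcen c hcC y)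
              (by rw [hcdef]; group) p
            rw [hcomm, ihx, ihy, pow_choose_two_eq_one hp hp2 c (hCp c hcC)]
            simp
          | inv x hx ihx => rw [inv_pow, ihx, inv_one]
        -- the top layer is central
        have hZ1cen : HP p G (f-1) ≤ Subgroup.center G := by
          rw [HP]
          refine (Subgroup.closure_le _).mpr ?_
          rintro x ⟨g, rfl⟩
          set h := g ^ p ^ (f-2) with hh
          have hx : g ^ p ^ (f-1) = h ^ p := by
            have hfe : f - 2 + 1 = f - 1 := by omega
            rw [hh, ← pow_mul, ← pow_succ, hfe]
          refine Subgroup.mem_center_iff.mpr (fun t => ?_)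
          set z := ⁅t, h⁆ with hzdef
          have hzZ : z ∈ HP p G (f-1) := by
            rw [hzdef, ← commutatorElement_inv]
            have h2 := freeI (f-2) (by rw [hdep]; omega) h t (mem_HP g)
            rw [hdep] at h2
            have h3 : f - 2 + 1 = f - 1 := by omega
            rw [h3] at h2
            exact inv_mem h2
          set c := h⁻¹ * z⁻¹ * h * z with hcdef
          have hcC : c ∈ C := by
            have h1 : ⁅z⁻¹, h⁻¹⁆ ∈ C := modC1 z⁻¹ h⁻¹ (inv_mem hzZ)
            have h2 : ⁅z⁻¹, h⁻¹⁆⁻¹ = c := by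
              rw [commutatorElement_def, hcdef]
              group
            rw [← h2]
            exact inv_mem h1
          have hcomm := pow_aux_comm z h c (hCcen c hcC z) (hCcen c hcC h)
            (by rw [hcdef]; group) p
          have hzh : (z * h) ^ p = h ^ p := by
            rw [hcomm, hom0 z hzZ, pow_choose_two_eq_one hp hp2 c (hCp c hcC)]
            simp
          have hkill : t * h ^ p * t⁻¹ = h ^ p := by
            have h1 : t * h ^ p * t⁻¹ = (t * h * t⁻¹) ^ p := conj_pow.symm
            rw [h1, ← brack t h]
            exact hzh
          rw [hx]
          calc t * h ^ p = (t * h ^ p * t⁻¹) * t := by group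
          _ = h ^ p * t := by rw [hkill]
        -- E1
        have E10 : ∀ x y : G, y ∈ HP p G (f - 2) → (x * y) ^ p = x ^ p * y ^ p := by
          intro x y hy
          set c := y⁻¹ * x⁻¹ * y * x with hcdef
          have hcZ : c ∈ HP p G (f-1) := by
            have h1 : ⁅y⁻¹, x⁻¹⁆ ∈ HP p G (f-1) := by
              have h2 := freeI (f-2) (by rw [hdep]; omega) y⁻¹ x⁻¹ (inv_mem hy)
              rw [hdep] at h2
              have h3 : f - 2 + 1 = f - 1 := by omega
              rwa [h3] at h2
            have h2 : ⁅y⁻¹, x⁻¹⁆ = c := by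
              rw [commutatorElement_def, hcdef]
              group
            rwa [h2] at h1
          have hccen : ∀ g' : G, c * g' = g' * c := fun g' =>
            (Subgroup.mem_center_iff.mp (hZ1cen hcZ) g').symm
          have hcomm := pow_aux_comm x y c (hccen x) (hccen y)
            (by rw [hcdef]; group) p
          rw [hcomm, pow_choose_two_eq_one hp hp2 c (hom0 c hcZ)]
          simp [mul_assoc]
        refine ⟨?_, hom0, E10⟩
        intro m hm
        rw [hdep] at hm
        exact le_trans (HP_mono p hp.one_lt.le (show f - 1 ≤ m by omega)) hZ1cen
  -- the main boundary induction
  have Ej : ∀ j : ℕ, ∀ x y : G, y ∈ HP p G (f - 1 - j) →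
      (x * y) ^ p ^ j = x ^ p ^ j * y ^ p ^ j := by
    intro j
    induction j using Nat.strong_induction_on with
    | _ j ihj =>
      match j with
      | 0 => intro x y _; simp
      | 1 => 
        intro x y hy
        have hm : f - 1 - 1 = f - 2 := by omega
        rw [hm] at hy
        rw [pow_one]
        exact E1 x y hy
      | (j' + 2) =>
        intro x y hy
        by_cases hjf : f ≤ j' + 2
        · rw [pow_eq_one_of_le hpowf hjf (x * y), pow_eq_one_of_le hpowf hjf x,
            pow_eq_one_of_le hpowf hjf y, one_mul]
        · set m := f - 1 - (j' + 2) with hmdef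
          have hmj : m + (j' + 2) = f - 1 := by omega
          have hKne : HP p G (m + 2) ≠ ⊥ := by rw [Ne, hbot]; omega
          obtain ⟨-, -, Q3⟩ := QPkg (HP p G (m+2)) hKne
          set π := QuotientGroup.mk' (HP p G (m+2)) with hπ
          have hexpK : ∀ q : G ⧸ HP p G (m+2), q ^ p ^ (1 + m + 1) = 1 := by
            have h1 : ∀ g : G, g ^ p ^ (m+2) ∈ HP p G (m+2) := fun g => mem_HP g
            have h2 := quot_exp (HP p G (m+2)) h1
            intro q
            have h3 : 1 + m + 1 = m + 2 := by omega
            rw [h3]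
            exact h2 q
          have h3 := Q3 1 m hexpK (π x) (π y) (HP_quot_mem _ hy)
          rw [pow_one] at h3
          set v := (x ^ p * y ^ p)⁻¹ * (x * y) ^ p with hvdef
          have hvK : v ∈ HP p G (m + 2) := by
            have hπv : π v = 1 := by
              rw [hvdef]
              rw [map_mul, map_inv, map_mul, map_pow, map_pow, map_pow, map_mul]
              rw [h3]
              group
            exact (quot_eq_one_iff _).mp hπv
          have hv : (x * y) ^ p = x ^ p * (y ^ p * v) := by rw [hvdef]; group
          have hyp1 : y ^ p ∈ HP p G (m + 1) := freeII m (by omega) y hy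
          have hv1 : v ∈ HP p G (m + 1) :=
            HP_mono p hp.one_lt.le (by omega) hvK
          have hw : y ^ p * v ∈ HP p G (m + 1) := mul_mem hyp1 hv1
          have hm1 : f - 1 - (j' + 1) = m + 1 := by omega
          have E' : ∀ x' y' : G, y' ∈ HP p G (m + 1) →
              (x' * y') ^ p ^ (j' + 1) = x' ^ p ^ (j' + 1) * y' ^ p ^ (j' + 1) := by
            intro x' y' hy'
            refine ihj (j' + 1) (by omega) x' y' ?_
            rw [hm1]
            exact hy'
          have hsplit : ∀ a : G, a ^ p ^ (j' + 2) = (a ^ p) ^ p ^ (j' + 1) := by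
            intro a
            rw [← pow_mul, ← pow_succ']
          have hvkill : v ^ p ^ (j' + 1) = 1 := by
            have h4 : v ^ p ^ j' ∈ HP p G (f - 1) := by
              have h5 := freeII_iter j' (m + 2) (by omega) v hvK
              have h6 : m + 2 + j' = f - 1 := by omega
              rwa [h6] at h5
            have h7 : v ^ p ^ (j' + 1) = (v ^ p ^ j') ^ p := by
              rw [← pow_mul, ← pow_succ]
            rw [h7]
            exact hom _ h4
          calc (x * y) ^ p ^ (j' + 2) = ((x * y) ^ p) ^ p ^ (j' + 1) := hsplit _
          _ = (x ^ p * (y ^ p * v)) ^ p ^ (j' + 1) := by rw [hv]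
          _ = (x ^ p) ^ p ^ (j' + 1) * (y ^ p * v) ^ p ^ (j' + 1) := E' _ _ hw
          _ = (x ^ p) ^ p ^ (j' + 1) * ((y ^ p) ^ p ^ (j' + 1) * v ^ p ^ (j' + 1)) :=
              by rw [E' _ _ hv1]
          _ = (x ^ p) ^ p ^ (j' + 1) * (y ^ p) ^ p ^ (j' + 1) := by rw [hvkill, mul_one]
          _ = x ^ p ^ (j' + 2) * y ^ p ^ (j' + 2) := by rw [← hsplit, ← hsplit]
  -- assemble the package
  refine ⟨?_, ?_, ?_⟩
  · -- PkgI
    intro m u t hu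
    by_cases h1 : m + dep p < f
    · exact freeI m h1 u t hu
    · by_cases h2 : f ≤ m
      · rw [(hbot m).mpr h2, Subgroup.mem_bot] at hu
        subst hu
        have : ⁅(1 : G), t⁆ = 1 := by simp
        rw [this]; exact one_mem _
      · have hc := hcen m (by omega) hu
        have hcm : Commute u t := (Subgroup.mem_center_iff.mp hc t).symm
        rw [commutatorElement_eq_one_iff_commute.mpr hcm]
        exact one_mem _
  · -- PkgII
    intro a u hu
    by_cases h1 : a + 1 < f
    · exact freeII a h1 u hu
    · by_cases h2 : f ≤ a
      · rw [(hbot a).mpr h2, Subgroup.mem_bot] at hu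
        subst hu
        rw [one_pow]; exact one_mem _
      · have ha : a = f - 1 := by omega
        subst ha
        rw [hom u hu]; exact one_mem _
  · -- PkgIII
    intro i m hiexp x y hy
    have hfle : f ≤ i + m + 1 := (hexp_dvd_iff _).mp hiexp
    by_cases hif : f ≤ i
    · rw [pow_eq_one_of_le hpowf hif (x * y), pow_eq_one_of_le hpowf hif x,
        pow_eq_one_of_le hpowf hif y, one_mul]
    · have hm : f - 1 - i ≤ m := by omega
      exact Ej i x y (HP_mono p hp.one_lt.le hm hy)

theorem master {p : ℕ} (hp : p.Prime) : ∀ (n : ℕ) (G : Type u) [Group G] [Finite G],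
    Nat.card G ≤ n → IsPGroup p G → IsPowerful p G →
    PkgI p G ∧ PkgII p G ∧ PkgIII p G := by
  intro n
  induction n with
  | zero =>
    intro G _ _ hle _ _
    have : 0 < Nat.card G := Nat.card_pos
    omega
  | succ n ih =>
    intro G _ _ hle hpG hpow
    by_cases h : Nat.card G ≤ n
    · exact ih G h hpG hpow
    · refine master_step hp G hpG hpow ?_
      intro K _ _ hlt hpK hpowK
      exact ih K (by omega) hpK hpowK

end PowAux

open Pointwise

/-- `X = {x : x^{p^i} ∈ G^{p^{e-1}}}` equals `Ω_{i}(G)·G^{p^{e-i-1}}`, and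
`|X| = |Ω_{i}(G)|·|G^{p^{e-i-1}}| / |Ω_{i}(G^{p^{e-i-1}})|` (stated multiplicatively). -/
theorem stmt16 (p : ℕ) (hp : p.Prime) (G : Type*) [Group G] [Finite G]
    (hpG : IsPGroup p G) (hpow : IsPowerful p G) (e : ℕ)
    (hexp : Monoid.exponent G = p ^ e) (i : ℕ) (hi : i + 2 ≤ e) :
    {x : G | x ^ p ^ i ∈ subgroupPow G (p ^ (e - 1))} =
      ({x : G | x ^ p ^ i = 1} : Set G) * (subgroupPow G (p ^ (e - i - 1)) : Set G) ∧
    Nat.card {x : G // x ^ p ^ i ∈ subgroupPow G (p ^ (e - 1))} *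
        Nat.card {y : subgroupPow G (p ^ (e - i - 1)) // y ^ p ^ i = 1} =
      Nat.card {x : G // x ^ p ^ i = 1} * Nat.card (subgroupPow G (p ^ (e - i - 1))) := by
  classical
  obtain ⟨P1, P2, P3⟩ := PowAux.master hp (Nat.card G) G le_rfl hpG hpow
  have hpowe : ∀ g : G, g ^ p ^ e = 1 := fun g => by
    rw [← hexp]; exact Monoid.pow_exponent_eq_one g
  set N : Subgroup G := subgroupPow G (p ^ (e - i - 1)) with hN
  set Z : Subgroup G := subgroupPow G (p ^ (e - 1)) with hZ
  have ha1 : i + (e - i - 1) + 1 = e := by omega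
  have ha2 : e - i - 1 + i = e - 1 := by omega
  have hIII : ∀ x y : G, y ∈ N → (x * y) ^ p ^ i = x ^ p ^ i * y ^ p ^ i := by
    intro x y hy
    refine P3 i (e - i - 1) ?_ x y hy
    intro g; rw [ha1]; exact hpowe g
  have hτmul : ∀ a b : G, (a * b) ^ p ^ (e - 1) = a ^ p ^ (e - 1) * b ^ p ^ (e - 1) := by
    intro a b
    refine P3 (e - 1) 0 ?_ a b ?_
    · intro g
      have h1 : e - 1 + 0 + 1 = e := by omega
      rw [h1]; exact hpowe g
    · rw [PowAux.HP_zero_eq_top p]; trivial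
  have hZsurj : ∀ z ∈ Z, ∃ g : G, g ^ p ^ (e - 1) = z := by
    intro z hz
    let τ : G →* G := MonoidHom.mk' (fun g => g ^ p ^ (e - 1)) hτmul
    have hle : Z ≤ τ.range := by
      rw [hZ, subgroupPow]
      refine (Subgroup.closure_le _).mpr ?_
      rintro x ⟨g, rfl⟩
      exact ⟨g, rfl⟩
    obtain ⟨g, hg⟩ := hle hz
    exact ⟨g, hg⟩
  have part1 : {x : G | x ^ p ^ i ∈ Z} =
      ({x : G | x ^ p ^ i = 1} : Set G) * (N : Set G) := by
    ext x
    simp only [Set.mem_setOf_eq, Set.mem_mul, SetLike.mem_coe]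
    constructor
    · intro hx
      obtain ⟨g, hg⟩ := hZsurj _ hx
      set y := g ^ p ^ (e - i - 1) with hy
      have hyN : y ∈ N := PowAux.mem_subgroupPow g
      have hyx : y ^ p ^ i = x ^ p ^ i := by
        rw [hy, PowAux.pow_pow_eq, ha2, hg]
      refine ⟨x * y⁻¹, ?_, y, hyN, by group⟩
      rw [hIII x y⁻¹ (inv_mem hyN), inv_pow, hyx]
      simp
    · rintro ⟨a, ha, b, hb, rfl⟩
      rw [hIII a b hb, ha, one_mul]
      have h2 := PowAux.PkgII_iter P2 (e - i - 1) i b hb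
      rwa [ha2] at h2
  refine ⟨part1, ?_⟩
  set ΩS : Set G := {x : G | x ^ p ^ i = 1} with hΩS
  set ΩN : Set G := {w : G | w ∈ N ∧ w ^ p ^ i = 1} with hΩN
  have keyΩ : ∀ a w : G, a ^ p ^ i = 1 → w ∈ N →
      ((a * w) ^ p ^ i = 1 ↔ w ^ p ^ i = 1) := by
    intro a w ha hw
    rw [hIII a w hw, ha, one_mul]
  have hsec : ∀ c : (ΩS.image ((↑) : G → G ⧸ N)), ∃ a : G, a ∈ ΩS ∧ ((a : G ⧸ N) = (c : G ⧸ N)) := by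
    rintro ⟨c, hc⟩
    obtain ⟨a, ha, hac⟩ := hc
    exact ⟨a, ha, hac⟩
  choose rep hrep1 hrep2 using hsec
  let cOf : ΩS → (ΩS.image ((↑) : G → G ⧸ N)) :=
    fun u => ⟨((u : G) : G ⧸ N), Set.mem_image_of_mem _ u.2⟩
  have hmemN : ∀ u : ΩS, (rep (cOf u))⁻¹ * (u : G) ∈ N := by
    intro u
    have h1 : ((rep (cOf u) : G) : G ⧸ N) = ((u : G) : G ⧸ N) := hrep2 (cOf u)
    exact QuotientGroup.eq.mp h1
  have hpowN : ∀ u : ΩS, ((rep (cOf u))⁻¹ * (u : G)) ^ p ^ i = 1 := by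
    intro u
    have h2 := keyΩ (rep (cOf u)) ((rep (cOf u))⁻¹ * (u : G)) (hrep1 (cOf u)) (hmemN u)
    have h3 : rep (cOf u) * ((rep (cOf u))⁻¹ * (u : G)) = (u : G) := by group
    rw [h3] at h2
    exact h2.mp u.2
  let F : ΩS → (ΩS.image ((↑) : G → G ⧸ N)) × ΩN :=
    fun u => ⟨cOf u, ⟨(rep (cOf u))⁻¹ * (u : G), hmemN u, hpowN u⟩⟩
  let Fi : (ΩS.image ((↑) : G → G ⧸ N)) × ΩN → ΩS :=
    fun cw => ⟨rep cw.1 * (cw.2 : G),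
      (keyΩ (rep cw.1) (cw.2 : G) (hrep1 cw.1) cw.2.2.1).mpr cw.2.2.2⟩
  have hFi : Function.LeftInverse Fi F := by
    intro u
    apply Subtype.ext
    show rep (cOf u) * ((rep (cOf u))⁻¹ * (u : G)) = (u : G)
    group
  have hFr : Function.RightInverse Fi F := by
    rintro ⟨c, w⟩
    have hc : cOf (Fi (c, w)) = c := by
      apply Subtype.ext
      show ((rep c * (w : G) : G) : G ⧸ N) = (c : G ⧸ N)
      rw [QuotientGroup.mk_mul_of_mem (rep c) w.2.1]
      exact hrep2 c
    refine Prod.ext hc ?_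
    apply Subtype.ext
    show (rep (cOf (Fi (c, w))))⁻¹ * ((Fi (c, w) : ΩS) : G) = (w : G)
    rw [hc]
    show (rep c)⁻¹ * (rep c * (w : G)) = (w : G)
    group
  have E : ΩS ≃ (ΩS.image ((↑) : G → G ⧸ N)) × ΩN := Equiv.mk F Fi hFi hFr
  have hcard2 : Nat.card ΩS = Nat.card (ΩS.image ((↑) : G → G ⧸ N)) * Nat.card ΩN := by
    rw [Nat.card_congr E, Nat.card_prod]
  have hcard1 : Nat.card ((ΩS * (N : Set G)) : Set G) =
      Nat.card N * Nat.card (ΩS.image ((↑) : G → G ⧸ N)) :=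
    Subgroup.card_mul_eq_card_subgroup_mul_card_quotient N ΩS
  have hXeq : Nat.card {x : G // x ^ p ^ i ∈ Z} = Nat.card ((ΩS * (N : Set G)) : Set G) :=
    Nat.card_congr (Equiv.setCongr part1)
  have hYeq : Nat.card {y : N // y ^ p ^ i = 1} = Nat.card ΩN := by
    apply Nat.card_congr
    have E1 : {y : N // y ^ p ^ i = 1} ≃ {y : N // ((y : G)) ^ p ^ i = 1} := by
      refine Equiv.subtypeEquivRight ?_
      intro y
      rw [Subtype.ext_iff]
      push_cast
      rfl
    exact E1.trans (Equiv.subtypeSubtypeEquivSubtypeInter (· ∈ N) (fun w => w ^ p ^ i = 1))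
  have hfin : Nat.card {x : G // x ^ p ^ i = 1} = Nat.card ΩS := rfl
  rw [hXeq, hcard1, hYeq, hfin, hcard2]
  ring
end
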